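/- arXiv:1605.06428 — 9 statements merged into one kernel-verified Lean document; each statement's English description precedes it below -/
import Mathlib

section
/- Let e : (Fin m → Fin n) → k be the coefficient tensor of a preregular m-linear form on k^n. Then there exists a tensor ẽ : (Fin m → Fin n) → k such that for all i, j ∈ Fin n one has Σ_{k_1,…,k_{m−1}} ẽ_{i k_1⋯k_{m−1}} · e_{k_1⋯k_{m−1} j} = δ_{ij}. -/
set_option maxHeartbeats 1000000 in
/-- A preregular `m`-linear form (here with `m = m' + 1 ≥ 2` arguments)
on `k^n` admits a polar form `ẽ` with
`Σ_{k_1,…,k_{m−1}} ẽ_{i k_1⋯k_{m−1}} · e_{k_1⋯k_{m−1} j} = δ_{ij}`. -/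
theorem exists_polar_form_left {k : Type*} [Field k] (m n : ℕ) (hm : 1 ≤ m) (hn : 1 ≤ n)
    (e : (Fin (m + 1) → Fin n) → k)
    (hnd : ∀ c : Fin n → k,
      (∀ iv : Fin m → Fin n, ∑ i : Fin n, c i * e (Fin.cons i iv) = 0) → c = 0)
    (hcyc : ∃ P : Matrix (Fin n) (Fin n) k, IsUnit P ∧
      ∀ (iv : Fin m → Fin n) (ℓ : Fin n),
        e (Fin.snoc iv ℓ) = ∑ k' : Fin n, P k' ℓ * e (Fin.cons k' iv)) :
    ∃ et : (Fin (m + 1) → Fin n) → k,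
      ∀ i j : Fin n,
        (∑ kv : Fin m → Fin n, et (Fin.cons i kv) * e (Fin.snoc kv j)) =
          if i = j then 1 else 0 := by
  obtain ⟨P, hP, hPc⟩ := hcyc
  have hPd : IsUnit P.det := (Matrix.isUnit_iff_isUnit_det P).mp hP
  set Q := P⁻¹ with hQ
  let T : (Fin n → k) →ₗ[k] ((Fin m → Fin n) → k) :=
    { toFun := fun c w => ∑ i, c i * e (Fin.cons i w)
      map_add' := by
        intro c d; funext w
        simp [add_mul, Finset.sum_add_distrib]
      map_smul' := by
        intro a c; funext w
        simp [Finset.mul_sum, mul_assoc] }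
  have hT : LinearMap.ker T = ⊥ := by
    rw [LinearMap.ker_eq_bot']
    intro c hc
    exact hnd c fun iv => congrFun hc iv
  obtain ⟨S, hS⟩ := T.exists_leftInverse_of_injective hT
  refine ⟨fun v => ∑ l, Q (v 0) l * S (Pi.single (Fin.tail v) 1) l, fun i j => ?_⟩
  have key : ∀ k' : Fin n,
      (∑ kv : Fin m → Fin n, (∑ l, Q i l * S (Pi.single kv 1) l) * e (Fin.cons k' kv))
        = Q i k' := by
    intro k'
    have hg : (∑ kv : Fin m → Fin n, e (Fin.cons k' kv) • (Pi.single kv (1 : k) : (Fin m → Fin n) → k))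
        = T (Pi.single k' 1) := by
      funext w
      simp [T, Finset.sum_apply, Pi.single_apply, mul_comm]
    have h1 : ∀ l : Fin n,
        (∑ kv : Fin m → Fin n, e (Fin.cons k' kv) * S (Pi.single kv 1) l)
          = (Pi.single k' (1 : k) : Fin n → k) l := by
      intro l
      have hST : S (T (Pi.single k' 1)) = Pi.single k' 1 := by
        simpa using LinearMap.congr_fun hS (Pi.single k' 1)
      have := congrArg (fun g => S g l) hg
      simpa [map_sum, Finset.sum_apply, smul_eq_mul, hST] using this
    calc (∑ kv : Fin m → Fin n, (∑ l, Q i l * S (Pi.single kv 1) l) * e (Fin.cons k' kv))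
        = ∑ l, Q i l * ∑ kv : Fin m → Fin n, e (Fin.cons k' kv) * S (Pi.single kv 1) l := by
          simp_rw [Finset.sum_mul, Finset.mul_sum]
          rw [Finset.sum_comm]
          exact Finset.sum_congr rfl fun l _ => Finset.sum_congr rfl fun kv _ => by ring
      _ = ∑ l, Q i l * (Pi.single k' (1 : k) : Fin n → k) l := by
          simp_rw [h1]
      _ = Q i k' := by simp [Pi.single_apply]
  simp only [Fin.cons_zero, Fin.tail_cons]
  simp_rw [hPc, Finset.mul_sum]
  rw [Finset.sum_comm]
  have step : (∑ k'' : Fin n, ∑ kv : Fin m → Fin n,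
      (∑ l, Q i l * S (Pi.single kv 1) l) * (P k'' j * e (Fin.cons k'' kv)))
      = ∑ k'' : Fin n, P k'' j * Q i k'' := by
    refine Finset.sum_congr rfl fun k'' _ => ?_
    rw [← key k'', Finset.mul_sum]
    exact Finset.sum_congr rfl fun kv _ => by ring
  rw [step]
  have : (∑ k'' : Fin n, P k'' j * Q i k'') = (Q * P) i j := by
    rw [Matrix.mul_apply]
    exact Finset.sum_congr rfl fun x _ => mul_comm _ _
  rw [this, hQ, Matrix.nonsing_inv_mul P hPd, Matrix.one_apply]
end

section
/- Let e : (Fin m → Fin n) → k be P-cyclic for an invertible P ∈ GL_n(k), and let ẽ be a polar form of e. Let K be an associative unital k-algebra, A = (a_{ij}) and B = (b_{ij}) n×n matrices over K, and D a unit of K, satisfying: (1) Σ_{i_1,…,i_m} e_{i_1⋯i_m} a_{i_1j_1}⋯a_{i_mj_m} = e_{j_1⋯j_m}·D for all j_1,…,j_m; (2) Σ_{i_1,…,i_m} e_{i_1⋯i_m} b_{i_mj_m}⋯b_{i_1j_1} = e_{j_1⋯j_m}·D^{-1} for all j_1,…,j_m; (3) A·B = I_n. Then B·A = I_n = A·B,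 and moreover, letting M be the n×n matrix over K with entries M_{ij} = Σ_{s,t} P_{ti}·(P^{-1})_{js}·D^{-1} a_{st} D, one has Bᵀ·M = I_n = M·Bᵀ. -/
open Matrix


lemma aux_sum_cons {n m : ℕ} {α : Type*} [AddCommMonoid α] (f : (Fin (m+1) → Fin n) → α) :
    ∑ iv : Fin (m+1) → Fin n, f iv
      = ∑ ℓ : Fin n, ∑ iv' : Fin m → Fin n, f (Fin.cons ℓ iv') := by
  rw [← Equiv.sum_comp (Fin.consEquiv (fun _ => Fin n)) f, Fintype.sum_prod_type]
  rfl

lemma aux_sum_snoc {n m : ℕ} {α : Type*} [AddCommMonoid α] (f : (Fin (m+1) → Fin n) → α) :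
    ∑ iv : Fin (m+1) → Fin n, f iv
      = ∑ ℓ : Fin n, ∑ iv' : Fin m → Fin n, f (Fin.snoc iv' ℓ) := by
  rw [← Equiv.sum_comp (Fin.snocEquiv (fun _ => Fin n)) f, Fintype.sum_prod_type]
  rfl

lemma aux_prod_cons {m : ℕ} {K : Type*} [Monoid K] (g : Fin (m+1) → K) :
    (List.ofFn g).prod = g 0 * (List.ofFn fun t : Fin m => g t.succ).prod := by
  rw [List.ofFn_succ, List.prod_cons]

lemma aux_prod_snoc {m : ℕ} {K : Type*} [Monoid K] (g : Fin (m+1) → K) :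
    (List.ofFn g).prod = (List.ofFn fun t : Fin m => g t.castSucc).prod * g (Fin.last m) := by
  rw [List.ofFn_succ', List.concat_eq_append, List.prod_append, List.prod_cons, List.prod_nil,
    mul_one]

lemma aux_revprod_snoc {m : ℕ} {K : Type*} [Monoid K] (g : Fin (m+1) → K) :
    (List.ofFn g).reverse.prod
      = g (Fin.last m) * (List.ofFn fun t : Fin m => g t.castSucc).reverse.prod := by
  rw [List.ofFn_succ', List.concat_eq_append, List.reverse_append, List.reverse_cons,
    List.reverse_nil, List.nil_append, List.singleton_append, List.prod_cons]

/-- (Lemma on `H(e)`-type relations.) If `A·B = I` and the matrices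
`A`, `B` over a `k`-algebra `K` satisfy the `e`-preserving relations with (unit)
quantum determinant `D`, for a `P`-cyclic tensor `e` with polar form `ẽ`, then
`B·A = I = A·B` and `Bᵀ·M = I = M·Bᵀ` where
`M_{ij} = Σ_{s,t} P_{ti}·(P⁻¹)_{js}·D⁻¹ a_{st} D`. -/
theorem He_matrix_inverses {k K : Type*} [Field k] [Ring K] [Algebra k K]
    (m n : ℕ) (hm : 1 ≤ m) (hn : 1 ≤ n)
    (e : (Fin (m + 1) → Fin n) → k)
    (P : Matrix (Fin n) (Fin n) k) (hP : IsUnit P)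
    (hcyc : ∀ (iv : Fin m → Fin n) (ℓ : Fin n),
      e (Fin.snoc iv ℓ) = ∑ k' : Fin n, P k' ℓ * e (Fin.cons k' iv))
    (et : (Fin (m + 1) → Fin n) → k)
    (hpolar : ∀ i j : Fin n,
      (∑ kv : Fin m → Fin n, et (Fin.cons i kv) * e (Fin.snoc kv j)) =
        if i = j then 1 else 0)
    (A B : Matrix (Fin n) (Fin n) K) (D : Kˣ)
    (h1 : ∀ jv : Fin (m + 1) → Fin n,
      (∑ iv : Fin (m + 1) → Fin n,
        e iv • (List.ofFn fun t : Fin (m + 1) => A (iv t) (jv t)).prod) =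
        e jv • (D : K))
    (h2 : ∀ jv : Fin (m + 1) → Fin n,
      (∑ iv : Fin (m + 1) → Fin n,
        e iv • ((List.ofFn fun t : Fin (m + 1) => B (iv t) (jv t)).reverse.prod)) =
        e jv • ((D⁻¹ : Kˣ) : K))
    (h3 : A * B = 1) :
    (B * A = 1 ∧ A * B = 1) ∧
    (Bᵀ * Matrix.of (fun i j : Fin n =>
        ∑ s : Fin n, ∑ t : Fin n,
          (P t i * P⁻¹ j s) • (((D⁻¹ : Kˣ) : K) * A s t * (D : K))) = 1 ∧
      Matrix.of (fun i j : Fin n =>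
        ∑ s : Fin n, ∑ t : Fin n,
          (P t i * P⁻¹ j s) • (((D⁻¹ : Kˣ) : K) * A s t * (D : K))) * Bᵀ = 1) := by
  have hPdet : IsUnit P.det := (Matrix.isUnit_iff_isUnit_det P).mp hP
  -- the polar-form matrix G is a two-sided inverse of P
  have hGP : (Matrix.of fun i s : Fin n =>
      ∑ kv : Fin m → Fin n, et (Fin.cons i kv) * e (Fin.cons s kv)) * P = 1 := by
    ext i j
    simp only [Matrix.mul_apply, Matrix.of_apply, Matrix.one_apply, Finset.sum_mul]
    rw [Finset.sum_comm]
    have key : ∀ kv : Fin m → Fin n,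
        ∑ s, et (Fin.cons i kv) * e (Fin.cons s kv) * P s j
          = et (Fin.cons i kv) * e (Fin.snoc kv j) := by
      intro kv
      rw [hcyc kv j, Finset.mul_sum]
      exact Finset.sum_congr rfl fun s _ => by ring
    rw [Finset.sum_congr rfl fun kv _ => key kv, hpolar]
  have hPinv : P⁻¹ = Matrix.of fun i s : Fin n =>
      ∑ kv : Fin m → Fin n, et (Fin.cons i kv) * e (Fin.cons s kv) :=
    Matrix.inv_eq_left_inv hGP
  have hPPinv : P * P⁻¹ = 1 := Matrix.mul_nonsing_inv P hPdet
  have hPinvP : P⁻¹ * P = 1 := Matrix.nonsing_inv_mul P hPdet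
  set pA : (Fin m → Fin n) → (Fin m → Fin n) → K :=
    fun iv kv => (List.ofFn fun t : Fin m => A (iv t) (kv t)).prod with hpA
  set pB : (Fin m → Fin n) → (Fin m → Fin n) → K :=
    fun iv kv => (List.ofFn fun t : Fin m => B (iv t) (kv t)).reverse.prod with hpB
  set S : Fin n → Fin n → K := fun i ℓ =>
    ∑ kv : Fin m → Fin n, ∑ iv' : Fin m → Fin n,
      (et (Fin.cons i kv) * e (Fin.snoc iv' ℓ)) • pA iv' kv with hS
  set T : Fin n → Fin n → K := fun i ℓ =>
    ∑ kv : Fin m → Fin n, ∑ iv' : Fin m → Fin n,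
      (et (Fin.cons i kv) * e (Fin.cons ℓ iv')) • pA iv' kv with hT
  set C : Fin n → Fin n → K := fun i ℓ =>
    ∑ kv : Fin m → Fin n, ∑ iv' : Fin m → Fin n,
      (et (Fin.cons i kv) * e (Fin.snoc iv' ℓ)) • pB iv' kv with hC
  -- specializations of h1 and h2
  have haveA1 : ∀ (kv : Fin m → Fin n) (j : Fin n),
      (∑ ℓ : Fin n, ∑ iv' : Fin m → Fin n,
        e (Fin.snoc iv' ℓ) • (pA iv' kv * A ℓ j)) = e (Fin.snoc kv j) • (D : K) := by
    intro kv j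
    have h := h1 (Fin.snoc kv j)
    rw [aux_sum_snoc] at h
    rw [← h]
    refine Finset.sum_congr rfl fun ℓ _ => Finset.sum_congr rfl fun iv' _ => ?_
    congr 1
    rw [aux_prod_snoc]
    simp [hpA, Fin.snoc_castSucc, Fin.snoc_last]
  have haveA2 : ∀ (kv : Fin m → Fin n) (s : Fin n),
      (∑ ℓ : Fin n, ∑ iv' : Fin m → Fin n,
        e (Fin.cons ℓ iv') • (A ℓ s * pA iv' kv)) = e (Fin.cons s kv) • (D : K) := by
    intro kv s
    have h := h1 (Fin.cons s kv)
    rw [aux_sum_cons] at h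
    rw [← h]
    refine Finset.sum_congr rfl fun ℓ _ => Finset.sum_congr rfl fun iv' _ => ?_
    congr 1
    rw [aux_prod_cons]
    simp [hpA, Fin.cons_zero, Fin.cons_succ]
  have haveB1 : ∀ (kv : Fin m → Fin n) (j : Fin n),
      (∑ ℓ : Fin n, ∑ iv' : Fin m → Fin n,
        e (Fin.snoc iv' ℓ) • (B ℓ j * pB iv' kv)) = e (Fin.snoc kv j) • ((D⁻¹ : Kˣ) : K) := by
    intro kv j
    have h := h2 (Fin.snoc kv j)
    rw [aux_sum_snoc] at h
    rw [← h]
    refine Finset.sum_congr rfl fun ℓ _ => Finset.sum_congr rfl fun iv' _ => ?_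
    congr 1
    rw [aux_revprod_snoc]
    simp [hpB, Fin.snoc_castSucc, Fin.snoc_last]
  -- key sum identities
  have hF1 : ∀ i j : Fin n, (∑ ℓ, S i ℓ * A ℓ j) = if i = j then (D : K) else 0 := by
    intro i j
    calc ∑ ℓ, S i ℓ * A ℓ j
        = ∑ ℓ : Fin n, ∑ kv : Fin m → Fin n, ∑ iv' : Fin m → Fin n,
            et (Fin.cons i kv) • (e (Fin.snoc iv' ℓ) • (pA iv' kv * A ℓ j)) := by
          simp only [hS, Finset.sum_mul, smul_mul_assoc, mul_smul]
      _ = ∑ kv : Fin m → Fin n, ∑ ℓ : Fin n, ∑ iv' : Fin m → Fin n,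
            et (Fin.cons i kv) • (e (Fin.snoc iv' ℓ) • (pA iv' kv * A ℓ j)) :=
          Finset.sum_comm
      _ = ∑ kv : Fin m → Fin n, et (Fin.cons i kv) •
            (∑ ℓ : Fin n, ∑ iv' : Fin m → Fin n,
              e (Fin.snoc iv' ℓ) • (pA iv' kv * A ℓ j)) := by
          simp only [Finset.smul_sum]
      _ = ∑ kv : Fin m → Fin n, et (Fin.cons i kv) • (e (Fin.snoc kv j) • (D : K)) :=
          Finset.sum_congr rfl fun kv _ => by rw [haveA1]
      _ = (∑ kv : Fin m → Fin n, et (Fin.cons i kv) * e (Fin.snoc kv j)) • (D : K) := by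
          simp only [smul_smul, Finset.sum_smul]
      _ = (if i = j then (1:k) else 0) • (D : K) := by rw [hpolar]
      _ = if i = j then (D : K) else 0 := by split <;> simp
  have hF2 : ∀ i s : Fin n, (∑ ℓ, A ℓ s * T i ℓ) = (P⁻¹ i s) • (D : K) := by
    intro i s
    calc ∑ ℓ, A ℓ s * T i ℓ
        = ∑ ℓ : Fin n, ∑ kv : Fin m → Fin n, ∑ iv' : Fin m → Fin n,
            et (Fin.cons i kv) • (e (Fin.cons ℓ iv') • (A ℓ s * pA iv' kv)) := by
          simp only [hT, Finset.mul_sum, mul_smul_comm, mul_smul]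
      _ = ∑ kv : Fin m → Fin n, ∑ ℓ : Fin n, ∑ iv' : Fin m → Fin n,
            et (Fin.cons i kv) • (e (Fin.cons ℓ iv') • (A ℓ s * pA iv' kv)) :=
          Finset.sum_comm
      _ = ∑ kv : Fin m → Fin n, et (Fin.cons i kv) •
            (∑ ℓ : Fin n, ∑ iv' : Fin m → Fin n,
              e (Fin.cons ℓ iv') • (A ℓ s * pA iv' kv)) := by
          simp only [Finset.smul_sum]
      _ = ∑ kv : Fin m → Fin n, et (Fin.cons i kv) • (e (Fin.cons s kv) • (D : K)) :=
          Finset.sum_congr rfl fun kv _ => by rw [haveA2]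
      _ = (∑ kv : Fin m → Fin n, et (Fin.cons i kv) * e (Fin.cons s kv)) • (D : K) := by
          simp only [smul_smul, Finset.sum_smul]
      _ = (P⁻¹ i s) • (D : K) := by rw [hPinv]; rfl
  have hF6 : ∀ i j : Fin n, (∑ ℓ, B ℓ j * C i ℓ) = if i = j then ((D⁻¹ : Kˣ) : K) else 0 := by
    intro i j
    calc ∑ ℓ, B ℓ j * C i ℓ
        = ∑ ℓ : Fin n, ∑ kv : Fin m → Fin n, ∑ iv' : Fin m → Fin n,
            et (Fin.cons i kv) • (e (Fin.snoc iv' ℓ) • (B ℓ j * pB iv' kv)) := by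
          simp only [hC, Finset.mul_sum, mul_smul_comm, mul_smul]
      _ = ∑ kv : Fin m → Fin n, ∑ ℓ : Fin n, ∑ iv' : Fin m → Fin n,
            et (Fin.cons i kv) • (e (Fin.snoc iv' ℓ) • (B ℓ j * pB iv' kv)) :=
          Finset.sum_comm
      _ = ∑ kv : Fin m → Fin n, et (Fin.cons i kv) •
            (∑ ℓ : Fin n, ∑ iv' : Fin m → Fin n,
              e (Fin.snoc iv' ℓ) • (B ℓ j * pB iv' kv)) := by
          simp only [Finset.smul_sum]
      _ = ∑ kv : Fin m → Fin n, et (Fin.cons i kv) • (e (Fin.snoc kv j) • ((D⁻¹ : Kˣ) : K)) :=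
          Finset.sum_congr rfl fun kv _ => by rw [haveB1]
      _ = (∑ kv : Fin m → Fin n, et (Fin.cons i kv) * e (Fin.snoc kv j)) • ((D⁻¹ : Kˣ) : K) := by
          simp only [smul_smul, Finset.sum_smul]
      _ = (if i = j then (1:k) else 0) • ((D⁻¹ : Kˣ) : K) := by rw [hpolar]
      _ = if i = j then ((D⁻¹ : Kˣ) : K) else 0 := by split <;> simp
  -- cyclicity relating S and T
  have hScyc : ∀ (j ℓ' : Fin n), S j ℓ' = ∑ k' : Fin n, P k' ℓ' • T j k' := by
    intro j ℓ'
    calc S j ℓ'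
        = ∑ kv : Fin m → Fin n, ∑ iv' : Fin m → Fin n, ∑ k' : Fin n,
            P k' ℓ' • ((et (Fin.cons j kv) * e (Fin.cons k' iv')) • pA iv' kv) := by
          simp only [hS]
          refine Finset.sum_congr rfl fun kv _ => Finset.sum_congr rfl fun iv' _ => ?_
          rw [hcyc iv' ℓ', Finset.mul_sum, Finset.sum_smul]
          refine Finset.sum_congr rfl fun k' _ => ?_
          rw [smul_smul]
          congr 1
          ring
      _ = ∑ kv : Fin m → Fin n, ∑ k' : Fin n, ∑ iv' : Fin m → Fin n,
            P k' ℓ' • ((et (Fin.cons j kv) * e (Fin.cons k' iv')) • pA iv' kv) :=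
          Finset.sum_congr rfl fun kv _ => Finset.sum_comm
      _ = ∑ k' : Fin n, ∑ kv : Fin m → Fin n, ∑ iv' : Fin m → Fin n,
            P k' ℓ' • ((et (Fin.cons j kv) * e (Fin.cons k' iv')) • pA iv' kv) :=
          Finset.sum_comm
      _ = ∑ k' : Fin n, P k' ℓ' • T j k' := by simp only [hT, Finset.smul_sum]
  have hTS : ∀ (j s : Fin n), T j s = ∑ ℓ : Fin n, (P⁻¹ ℓ s) • S j ℓ := by
    intro j s
    symm
    calc ∑ ℓ : Fin n, (P⁻¹ ℓ s) • S j ℓ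
        = ∑ ℓ : Fin n, ∑ k' : Fin n, (P k' ℓ * P⁻¹ ℓ s) • T j k' := by
          refine Finset.sum_congr rfl fun ℓ _ => ?_
          rw [hScyc, Finset.smul_sum]
          refine Finset.sum_congr rfl fun k' _ => ?_
          rw [smul_smul]
          congr 1
          ring
      _ = ∑ k' : Fin n, (∑ ℓ : Fin n, P k' ℓ * P⁻¹ ℓ s) • T j k' := by
          rw [Finset.sum_comm]
          simp only [Finset.sum_smul]
      _ = ∑ k' : Fin n, ((P * P⁻¹) k' s) • T j k' := by simp only [Matrix.mul_apply]
      _ = T j s := by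
          rw [hPPinv]
          simp [Matrix.one_apply, ite_smul]
  -- B is a two-sided inverse of A
  have hL : (Matrix.of fun i ℓ : Fin n => ((D⁻¹ : Kˣ) : K) * S i ℓ) * A = 1 := by
    ext i j
    simp only [Matrix.mul_apply, Matrix.of_apply, Matrix.one_apply, mul_assoc,
      ← Finset.mul_sum]
    rw [hF1]
    split
    · exact D.inv_mul
    · exact mul_zero _
  have hLB : (Matrix.of fun i ℓ : Fin n => ((D⁻¹ : Kˣ) : K) * S i ℓ) = B :=
    left_inv_eq_right_inv hL h3
  have hBA : B * A = 1 := by rw [← hLB]; exact hL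
  have hSB : ∀ i ℓ : Fin n, (D : K) * B i ℓ = S i ℓ := by
    intro i ℓ
    rw [← hLB]
    show (D : K) * (((D⁻¹ : Kˣ) : K) * S i ℓ) = S i ℓ
    rw [← mul_assoc, D.mul_inv, one_mul]
  -- M is a left inverse of Bᵀ
  have hMBt : Matrix.of (fun i j : Fin n =>
      ∑ s : Fin n, ∑ t : Fin n,
        (P t i * P⁻¹ j s) • (((D⁻¹ : Kˣ) : K) * A s t * (D : K))) * Bᵀ = 1 := by
    ext i j
    simp only [Matrix.mul_apply, Matrix.of_apply, Matrix.transpose_apply, Matrix.one_apply]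
    calc ∑ ℓ : Fin n, (∑ s : Fin n, ∑ t : Fin n,
            (P t i * P⁻¹ ℓ s) • (((D⁻¹ : Kˣ) : K) * A s t * (D : K))) * B j ℓ
        = ∑ ℓ : Fin n, ∑ s : Fin n, ∑ t : Fin n,
            P t i • ((P⁻¹ ℓ s) • (((D⁻¹ : Kˣ) : K) * A s t * S j ℓ)) := by
          refine Finset.sum_congr rfl fun ℓ _ => ?_
          rw [Finset.sum_mul]
          refine Finset.sum_congr rfl fun s _ => ?_
          rw [Finset.sum_mul]
          refine Finset.sum_congr rfl fun t _ => ?_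
          rw [smul_mul_assoc, mul_assoc (((D⁻¹ : Kˣ) : K) * A s t), hSB, mul_smul]
      _ = ∑ s : Fin n, ∑ ℓ : Fin n, ∑ t : Fin n,
            P t i • ((P⁻¹ ℓ s) • (((D⁻¹ : Kˣ) : K) * A s t * S j ℓ)) := Finset.sum_comm
      _ = ∑ s : Fin n, ∑ t : Fin n, ∑ ℓ : Fin n,
            P t i • ((P⁻¹ ℓ s) • (((D⁻¹ : Kˣ) : K) * A s t * S j ℓ)) :=
          Finset.sum_congr rfl fun s _ => Finset.sum_comm
      _ = ∑ s : Fin n, ∑ t : Fin n,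
            P t i • (((D⁻¹ : Kˣ) : K) * A s t * T j s) := by
          refine Finset.sum_congr rfl fun s _ => Finset.sum_congr rfl fun t _ => ?_
          rw [← Finset.smul_sum]
          congr 1
          rw [hTS]
          rw [Finset.mul_sum]
          refine Finset.sum_congr rfl fun ℓ _ => ?_
          rw [mul_smul_comm]
      _ = ∑ t : Fin n, ∑ s : Fin n,
            P t i • (((D⁻¹ : Kˣ) : K) * A s t * T j s) := Finset.sum_comm
      _ = ∑ t : Fin n, P t i • (((D⁻¹ : Kˣ) : K) * ((P⁻¹ j t) • (D : K))) := by
          refine Finset.sum_congr rfl fun t _ => ?_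
          rw [← Finset.smul_sum]
          congr 1
          simp only [mul_assoc, ← Finset.mul_sum]
          rw [hF2]
      _ = ∑ t : Fin n, (P t i * P⁻¹ j t) • (1 : K) := by
          refine Finset.sum_congr rfl fun t _ => ?_
          rw [mul_smul_comm, D.inv_mul, smul_smul]
      _ = if i = j then 1 else 0 := by
          rw [← Finset.sum_smul]
          have : ∑ t : Fin n, P t i * P⁻¹ j t = (P⁻¹ * P) j i := by
            rw [Matrix.mul_apply]
            exact Finset.sum_congr rfl fun t _ => mul_comm _ _
          rw [this, hPinvP]
          by_cases h : i = j <;> simp [Matrix.one_apply, h, eq_comm]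
  -- the matrix built from C is a right inverse of Bᵀ
  have hBR : Bᵀ * (Matrix.of fun ℓ i' : Fin n => C i' ℓ * (D : K)) = 1 := by
    ext i j
    simp only [Matrix.mul_apply, Matrix.of_apply, Matrix.transpose_apply, Matrix.one_apply]
    calc ∑ ℓ : Fin n, B ℓ i * (C j ℓ * (D : K))
        = (∑ ℓ : Fin n, B ℓ i * C j ℓ) * (D : K) := by
          rw [Finset.sum_mul]
          exact Finset.sum_congr rfl fun ℓ _ => (mul_assoc _ _ _).symm
      _ = (if j = i then ((D⁻¹ : Kˣ) : K) else 0) * (D : K) := by rw [hF6]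
      _ = if i = j then 1 else 0 := by
          by_cases h : i = j <;> simp [h, eq_comm, D.inv_mul]
  refine ⟨⟨hBA, h3⟩, ?_, hMBt⟩
  rw [left_inv_eq_right_inv hMBt hBR]
  exact hBR
end

section
/- Let f : (Fin m → Fin n) → k be Q-cyclic for an invertible Q ∈ GL_n(k), and let f̃ be a polar form of f. Let K be an associative unital k-algebra, A = (a_{ij}) and B = (b_{ij}) n×n matrices over K, and D a unit of K, satisfying: (1) Σ_{i_1,…,i_m} f_{i_1⋯i_m} a_{j_1i_1}⋯a_{j_mi_m} = f_{j_1⋯j_m}·D^{-1} for all j_1,…,j_m; (2) Σ_{i_1,…,i_m} f_{i_1⋯i_m} b_{j_mi_m}⋯b_{j_1i_1} = f_{j_1⋯j_m}·D for all j_1,…,j_m; (3) B·A = I_n. Then A·B = I_n = B·A, and moreover, letting M be the n×n matrix over K with entries M_{ij} = Σ_{s,t} Q_{is}·(Q^{-1})_{tj}·D^{-1} a_{ts} D, one has Bᵀ·M = I_n = M·Bᵀ. -/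
open Matrix

private lemma sum_fn_cons {n m : ℕ} {M : Type*} [AddCommMonoid M]
    (F : (Fin (m + 1) → Fin n) → M) :
    ∑ g : Fin (m + 1) → Fin n, F g
      = ∑ i : Fin n, ∑ w : Fin m → Fin n, F (Fin.cons i w) := by
  rw [← (Fin.consEquiv fun _ : Fin (m + 1) => Fin n).sum_comp F, Fintype.sum_prod_type]
  rfl

private lemma sum_fn_snoc {n m : ℕ} {M : Type*} [AddCommMonoid M]
    (F : (Fin (m + 1) → Fin n) → M) :
    ∑ g : Fin (m + 1) → Fin n, F g
      = ∑ w : Fin m → Fin n, ∑ ℓ : Fin n, F (Fin.snoc w ℓ) := by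
  rw [← (Fin.snocEquiv fun _ : Fin (m + 1) => Fin n).sum_comp F, Fintype.sum_prod_type,
    Finset.sum_comm]
  rfl

private lemma sum_rot {α β γ M : Type*} [Fintype α] [Fintype β] [Fintype γ] [AddCommMonoid M]
    (g : α → β → γ → M) :
    ∑ a, ∑ b, ∑ c, g a b c = ∑ b, ∑ c, ∑ a, g a b c := by
  rw [Finset.sum_comm]
  exact Finset.sum_congr rfl fun b _ => Finset.sum_comm

private lemma sum_rot' {α β γ M : Type*} [Fintype α] [Fintype β] [Fintype γ] [AddCommMonoid M]
    (g : α → β → γ → M) :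
    ∑ a, ∑ b, ∑ c, g a b c = ∑ c, ∑ a, ∑ b, g a b c :=
  (sum_rot g).trans (sum_rot fun b c a => g a b c)

/-- Auxiliary "candidate inverse" matrix built from `f`, its polar form and the matrix `A`. -/
private def auxC {k K : Type*} [Field k] [Ring K] [Algebra k K] {m n : ℕ}
    (f ft : (Fin (m + 1) → Fin n) → k) (A : Matrix (Fin n) (Fin n) K)
    (i l : Fin n) : K :=
  ∑ kv : Fin m → Fin n, ∑ w : Fin m → Fin n,
    (ft (Fin.snoc kv l) * f (Fin.cons i w)) •
      (List.ofFn fun t : Fin m => A (kv t) (w t)).prod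

/-- Auxiliary "candidate inverse" matrix built from `f`, its polar form and the matrix `B`,
using reversed products. -/
private def auxC' {k K : Type*} [Field k] [Ring K] [Algebra k K] {m n : ℕ}
    (f ft : (Fin (m + 1) → Fin n) → k) (B : Matrix (Fin n) (Fin n) K)
    (i l : Fin n) : K :=
  ∑ kv : Fin m → Fin n, ∑ w : Fin m → Fin n,
    (ft (Fin.snoc kv l) * f (Fin.cons i w)) •
      (List.ofFn fun t : Fin m => B (kv t) (w t)).reverse.prod

/-- (Lemma on `H(f)`-type relations.) If `B·A = I` and the matrices
`A`, `B` over a `k`-algebra `K` satisfy the `f`-preserving relations with (unit)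
quantum determinant `D`, for a `Q`-cyclic tensor `f` with polar form `f̃`, then
`A·B = I = B·A` and `Bᵀ·M = I = M·Bᵀ` where
`M_{ij} = Σ_{s,t} Q_{is}·(Q⁻¹)_{tj}·D⁻¹ a_{ts} D`. -/
theorem Hf_matrix_inverses {k K : Type*} [Field k] [Ring K] [Algebra k K]
    (m n : ℕ) (hm : 1 ≤ m) (hn : 1 ≤ n)
    (f : (Fin (m + 1) → Fin n) → k)
    (Q : Matrix (Fin n) (Fin n) k) (hQ : IsUnit Q)
    (hcyc : ∀ (iv : Fin m → Fin n) (ℓ : Fin n),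
      f (Fin.snoc iv ℓ) = ∑ k' : Fin n, Q k' ℓ * f (Fin.cons k' iv))
    (ft : (Fin (m + 1) → Fin n) → k)
    (hpolar : ∀ i j : Fin n,
      (∑ kv : Fin m → Fin n, f (Fin.cons i kv) * ft (Fin.snoc kv j)) =
        if i = j then 1 else 0)
    (A B : Matrix (Fin n) (Fin n) K) (D : Kˣ)
    (h1 : ∀ jv : Fin (m + 1) → Fin n,
      (∑ iv : Fin (m + 1) → Fin n,
        f iv • (List.ofFn fun t : Fin (m + 1) => A (jv t) (iv t)).prod) =
        f jv • ((D⁻¹ : Kˣ) : K))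
    (h2 : ∀ jv : Fin (m + 1) → Fin n,
      (∑ iv : Fin (m + 1) → Fin n,
        f iv • ((List.ofFn fun t : Fin (m + 1) => B (jv t) (iv t)).reverse.prod)) =
        f jv • (D : K))
    (h3 : B * A = 1) :
    (A * B = 1 ∧ B * A = 1) ∧
    (Bᵀ * Matrix.of (fun i j : Fin n =>
        ∑ s : Fin n, ∑ t : Fin n,
          (Q i s * Q⁻¹ t j) • (((D⁻¹ : Kˣ) : K) * A t s * (D : K))) = 1 ∧
      Matrix.of (fun i j : Fin n =>
        ∑ s : Fin n, ∑ t : Fin n,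
          (Q i s * Q⁻¹ t j) • (((D⁻¹ : Kˣ) : K) * A t s * (D : K))) * Bᵀ = 1) := by
  classical
  have hQQ : Q * Q⁻¹ = 1 := Matrix.mul_nonsing_inv Q ((Matrix.isUnit_iff_isUnit_det Q).mp hQ)
  have hDiDv : ((D⁻¹ : Kˣ) : K) * (D : K) = 1 := Units.inv_mul D
  have hDvDi : (D : K) * ((D⁻¹ : Kˣ) : K) = 1 := Units.mul_inv D
  -- shorthand for the two inner f-preserving relations with the first slot split off
  have e1 : ∀ (j : Fin n) (kv : Fin m → Fin n),
      (∑ i : Fin n, ∑ w : Fin m → Fin n,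
        f (Fin.cons i w) • (A j i * (List.ofFn fun t : Fin m => A (kv t) (w t)).prod))
        = f (Fin.cons j kv) • ((D⁻¹ : Kˣ) : K) := by
    intro j kv
    have h := h1 (Fin.cons j kv)
    rw [sum_fn_cons] at h
    simpa only [List.ofFn_succ, List.prod_cons, Fin.cons_zero, Fin.cons_succ] using h
  have e2 : ∀ (j : Fin n) (kv : Fin m → Fin n),
      (∑ i : Fin n, ∑ w : Fin m → Fin n,
        f (Fin.cons i w) •
          ((List.ofFn fun t : Fin m => B (kv t) (w t)).reverse.prod * B j i))
        = f (Fin.cons j kv) • (D : K) := by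
    intro j kv
    have h := h2 (Fin.cons j kv)
    rw [sum_fn_cons] at h
    simpa only [List.ofFn_succ, List.reverse_cons, List.prod_append, List.prod_cons,
      List.prod_nil, List.prod_singleton, Fin.cons_zero, Fin.cons_succ, mul_one] using h
  have e3 : ∀ (u : Fin n) (kv : Fin m → Fin n),
      (∑ c : Fin n, ∑ w : Fin m → Fin n,
        f (Fin.cons c w) •
          ((List.ofFn fun t : Fin m => A (kv t) (w t)).prod * (∑ ℓ : Fin n, Q c ℓ • A u ℓ)))
        = ∑ c : Fin n, (Q c u * f (Fin.cons c kv)) • ((D⁻¹ : Kˣ) : K) := by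
    intro u kv
    have h := h1 (Fin.snoc kv u)
    rw [sum_fn_snoc] at h
    simp only [List.ofFn_succ', List.concat_eq_append, List.prod_append, List.prod_cons,
      List.prod_nil, mul_one, Fin.snoc_castSucc, Fin.snoc_last] at h
    simp only [hcyc, Finset.sum_smul] at h
    refine Eq.trans ?_ h
    calc ∑ c : Fin n, ∑ w : Fin m → Fin n,
          f (Fin.cons c w) •
            ((List.ofFn fun t : Fin m => A (kv t) (w t)).prod * (∑ ℓ : Fin n, Q c ℓ • A u ℓ))
        = ∑ c : Fin n, ∑ w : Fin m → Fin n, ∑ ℓ : Fin n,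
            (Q c ℓ * f (Fin.cons c w)) •
              ((List.ofFn fun t : Fin m => A (kv t) (w t)).prod * A u ℓ) := by
          refine Finset.sum_congr rfl fun c _ => Finset.sum_congr rfl fun w _ => ?_
          rw [Finset.mul_sum, Finset.smul_sum]
          refine Finset.sum_congr rfl fun ℓ _ => ?_
          rw [mul_smul_comm, smul_smul, mul_comm]
      _ = ∑ w : Fin m → Fin n, ∑ ℓ : Fin n, ∑ c : Fin n,
            (Q c ℓ * f (Fin.cons c w)) •
              ((List.ofFn fun t : Fin m => A (kv t) (w t)).prod * A u ℓ) := sum_rot _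
  -- key relation 1 : A * (C D) = 1 entrywise
  have key1 : ∀ j l : Fin n,
      ∑ i : Fin n, A j i * auxC f ft A i l = (if j = l then (1:k) else 0) • ((D⁻¹ : Kˣ) : K) := by
    intro j l
    calc ∑ i : Fin n, A j i * auxC f ft A i l
        = ∑ i : Fin n, ∑ kv : Fin m → Fin n, ∑ w : Fin m → Fin n,
            ft (Fin.snoc kv l) • (f (Fin.cons i w) •
              (A j i * (List.ofFn fun t : Fin m => A (kv t) (w t)).prod)) := by
          refine Finset.sum_congr rfl fun i _ => ?_
          simp only [auxC, Finset.mul_sum, mul_smul_comm, mul_smul]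
      _ = ∑ kv : Fin m → Fin n, ft (Fin.snoc kv l) •
            ∑ i : Fin n, ∑ w : Fin m → Fin n, f (Fin.cons i w) •
              (A j i * (List.ofFn fun t : Fin m => A (kv t) (w t)).prod) := by
          rw [Finset.sum_comm]
          refine Finset.sum_congr rfl fun kv _ => ?_
          rw [Finset.smul_sum]
          refine Finset.sum_congr rfl fun i _ => ?_
          rw [Finset.smul_sum]
      _ = ∑ kv : Fin m → Fin n, ft (Fin.snoc kv l) • (f (Fin.cons j kv) • ((D⁻¹ : Kˣ) : K)) := by
          refine Finset.sum_congr rfl fun kv _ => ?_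
          rw [e1 j kv]
      _ = (∑ kv : Fin m → Fin n, f (Fin.cons j kv) * ft (Fin.snoc kv l)) • ((D⁻¹ : Kˣ) : K) := by
          rw [Finset.sum_smul]
          refine Finset.sum_congr rfl fun kv _ => ?_
          rw [smul_smul, mul_comm]
      _ = (if j = l then (1:k) else 0) • ((D⁻¹ : Kˣ) : K) := by rw [hpolar]
  -- key relation 2 : (C' B) = D entrywise
  have key2 : ∀ j l : Fin n,
      ∑ i : Fin n, auxC' f ft B i l * B j i = (if j = l then (1:k) else 0) • (D : K) := by
    intro j l
    calc ∑ i : Fin n, auxC' f ft B i l * B j i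
        = ∑ i : Fin n, ∑ kv : Fin m → Fin n, ∑ w : Fin m → Fin n,
            ft (Fin.snoc kv l) • (f (Fin.cons i w) •
              ((List.ofFn fun t : Fin m => B (kv t) (w t)).reverse.prod * B j i)) := by
          refine Finset.sum_congr rfl fun i _ => ?_
          simp only [auxC', Finset.sum_mul, smul_mul_assoc, mul_smul]
      _ = ∑ kv : Fin m → Fin n, ft (Fin.snoc kv l) •
            ∑ i : Fin n, ∑ w : Fin m → Fin n, f (Fin.cons i w) •
              ((List.ofFn fun t : Fin m => B (kv t) (w t)).reverse.prod * B j i) := by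
          rw [Finset.sum_comm]
          refine Finset.sum_congr rfl fun kv _ => ?_
          rw [Finset.smul_sum]
          refine Finset.sum_congr rfl fun i _ => ?_
          rw [Finset.smul_sum]
      _ = ∑ kv : Fin m → Fin n, ft (Fin.snoc kv l) • (f (Fin.cons j kv) • (D : K)) := by
          refine Finset.sum_congr rfl fun kv _ => ?_
          rw [e2 j kv]
      _ = (∑ kv : Fin m → Fin n, f (Fin.cons j kv) * ft (Fin.snoc kv l)) • (D : K) := by
          rw [Finset.sum_smul]
          refine Finset.sum_congr rfl fun kv _ => ?_
          rw [smul_smul, mul_comm]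
      _ = (if j = l then (1:k) else 0) • (D : K) := by rw [hpolar]
  -- key relation 3 : rotated form of relation 1
  have key3 : ∀ l u : Fin n,
      ∑ c : Fin n, auxC f ft A c l * (∑ ℓ : Fin n, Q c ℓ • A u ℓ)
        = Q l u • ((D⁻¹ : Kˣ) : K) := by
    intro l u
    calc ∑ c : Fin n, auxC f ft A c l * (∑ ℓ : Fin n, Q c ℓ • A u ℓ)
        = ∑ c : Fin n, ∑ kv : Fin m → Fin n, ∑ w : Fin m → Fin n,
            ft (Fin.snoc kv l) • (f (Fin.cons c w) •
              ((List.ofFn fun t : Fin m => A (kv t) (w t)).prod * (∑ ℓ : Fin n, Q c ℓ • A u ℓ))) := by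
          refine Finset.sum_congr rfl fun c _ => ?_
          simp only [auxC, Finset.sum_mul, smul_mul_assoc, mul_smul]
      _ = ∑ kv : Fin m → Fin n, ft (Fin.snoc kv l) •
            ∑ c : Fin n, ∑ w : Fin m → Fin n, f (Fin.cons c w) •
              ((List.ofFn fun t : Fin m => A (kv t) (w t)).prod * (∑ ℓ : Fin n, Q c ℓ • A u ℓ)) := by
          rw [Finset.sum_comm]
          refine Finset.sum_congr rfl fun kv _ => ?_
          rw [Finset.smul_sum]
          refine Finset.sum_congr rfl fun c _ => ?_
          rw [Finset.smul_sum]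
      _ = ∑ kv : Fin m → Fin n, ft (Fin.snoc kv l) •
            ∑ c : Fin n, (Q c u * f (Fin.cons c kv)) • ((D⁻¹ : Kˣ) : K) := by
          refine Finset.sum_congr rfl fun kv _ => ?_
          rw [e3 u kv]
      _ = ∑ c : Fin n, ∑ kv : Fin m → Fin n,
            (ft (Fin.snoc kv l) * (Q c u * f (Fin.cons c kv))) • ((D⁻¹ : Kˣ) : K) := by
          simp only [Finset.smul_sum, smul_smul]
          exact Finset.sum_comm
      _ = ∑ c : Fin n, (Q c u * (∑ kv : Fin m → Fin n, f (Fin.cons c kv) * ft (Fin.snoc kv l))) •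
            ((D⁻¹ : Kˣ) : K) := by
          refine Finset.sum_congr rfl fun c _ => ?_
          rw [Finset.mul_sum, Finset.sum_smul]
          refine Finset.sum_congr rfl fun kv _ => ?_
          congr 1
          ring
      _ = ∑ c : Fin n, (Q c u * (if c = l then (1:k) else 0)) • ((D⁻¹ : Kˣ) : K) := by
          simp only [hpolar]
      _ = Q l u • ((D⁻¹ : Kˣ) : K) := by
          rw [Finset.sum_eq_single l]
          · rw [if_pos rfl, mul_one]
          · intro c _ hc; rw [if_neg hc, mul_zero, zero_smul]
          · intro habs; exact absurd (Finset.mem_univ l) habs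
  -- A * (C·D) = 1
  have hACD : A * Matrix.of (fun i l : Fin n => auxC f ft A i l * (D : K)) = 1 := by
    ext j l
    rw [Matrix.mul_apply, Matrix.one_apply]
    calc ∑ i : Fin n, A j i * Matrix.of (fun i l : Fin n => auxC f ft A i l * (D : K)) i l
        = (∑ i : Fin n, A j i * auxC f ft A i l) * (D : K) := by
          rw [Finset.sum_mul]
          refine Finset.sum_congr rfl fun i _ => ?_
          rw [Matrix.of_apply, mul_assoc]
      _ = ((if j = l then (1:k) else 0) • ((D⁻¹ : Kˣ) : K)) * (D : K) := by rw [key1]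
      _ = (if j = l then (1:K) else 0) := by
          rw [smul_mul_assoc, hDiDv]
          split_ifs <;> simp
  have hB : B = Matrix.of (fun i l : Fin n => auxC f ft A i l * (D : K)) := by
    calc B = B * (A * Matrix.of (fun i l : Fin n => auxC f ft A i l * (D : K))) := by
          rw [hACD, mul_one]
      _ = (B * A) * Matrix.of (fun i l : Fin n => auxC f ft A i l * (D : K)) := by
          rw [mul_assoc]
      _ = Matrix.of (fun i l : Fin n => auxC f ft A i l * (D : K)) := by rw [h3, one_mul]
  have hAB : A * B = 1 := by rw [hB]; exact hACD
  have hCB : ∀ i l : Fin n, auxC f ft A i l = B i l * ((D⁻¹ : Kˣ) : K) := by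
    intro i l
    have hBil : B i l = auxC f ft A i l * (D : K) := by rw [hB]; rfl
    rw [hBil, mul_assoc, hDvDi, mul_one]
  have key3' : ∀ l u : Fin n,
      ∑ c : Fin n, B c l * (((D⁻¹ : Kˣ) : K) * (∑ ℓ : Fin n, Q c ℓ • A u ℓ) * (D : K))
        = Q l u • (1 : K) := by
    intro l u
    have h := key3 l u
    simp only [hCB] at h
    have h' := congrArg (· * (D : K)) h
    rw [Finset.sum_mul, smul_mul_assoc, hDiDv] at h'
    refine Eq.trans ?_ h'
    refine Finset.sum_congr rfl fun c _ => ?_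
    rw [← mul_assoc, ← mul_assoc]
  -- the matrix M
  set M : Matrix (Fin n) (Fin n) K := Matrix.of (fun i j : Fin n =>
      ∑ s : Fin n, ∑ t : Fin n,
        (Q i s * Q⁻¹ t j) • (((D⁻¹ : Kˣ) : K) * A t s * (D : K))) with hM
  have hBM : Bᵀ * M = 1 := by
    ext i l
    rw [Matrix.mul_apply, Matrix.one_apply]
    simp only [hM, Matrix.transpose_apply, Matrix.of_apply]
    have inner : ∀ j t : Fin n,
        B j i * (((D⁻¹ : Kˣ) : K) * (∑ s : Fin n, Q j s • A t s) * (D : K))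
          = ∑ s : Fin n, Q j s • (B j i * (((D⁻¹ : Kˣ) : K) * A t s * (D : K))) := by
      intro j t
      simp only [Finset.mul_sum, Finset.sum_mul, mul_smul_comm, smul_mul_assoc]
    calc ∑ j : Fin n, B j i * ∑ s : Fin n, ∑ t : Fin n,
            (Q j s * Q⁻¹ t l) • (((D⁻¹ : Kˣ) : K) * A t s * (D : K))
        = ∑ j : Fin n, ∑ s : Fin n, ∑ t : Fin n,
            Q⁻¹ t l • (Q j s • (B j i * (((D⁻¹ : Kˣ) : K) * A t s * (D : K)))) := by
          refine Finset.sum_congr rfl fun j _ => ?_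
          rw [Finset.mul_sum]
          refine Finset.sum_congr rfl fun s _ => ?_
          rw [Finset.mul_sum]
          refine Finset.sum_congr rfl fun t _ => ?_
          rw [mul_smul_comm, mul_comm (Q j s), mul_smul]
      _ = ∑ t : Fin n, ∑ j : Fin n, ∑ s : Fin n,
            Q⁻¹ t l • (Q j s • (B j i * (((D⁻¹ : Kˣ) : K) * A t s * (D : K)))) := sum_rot' _
      _ = ∑ t : Fin n, Q⁻¹ t l • ∑ j : Fin n,
            B j i * (((D⁻¹ : Kˣ) : K) * (∑ s : Fin n, Q j s • A t s) * (D : K)) := by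
          refine Finset.sum_congr rfl fun t _ => ?_
          rw [Finset.smul_sum]
          refine Finset.sum_congr rfl fun j _ => ?_
          rw [inner j t, Finset.smul_sum]
      _ = ∑ t : Fin n, Q⁻¹ t l • (Q i t • (1 : K)) := by
          refine Finset.sum_congr rfl fun t _ => ?_
          rw [key3' i t]
      _ = (∑ t : Fin n, Q i t * Q⁻¹ t l) • (1 : K) := by
          rw [Finset.sum_smul]
          refine Finset.sum_congr rfl fun t _ => ?_
          rw [smul_smul, mul_comm]
      _ = if i = l then 1 else 0 := by
          rw [← Matrix.mul_apply, hQQ]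
          by_cases h : i = l <;> simp [h, Matrix.one_apply]
  have hNB : Matrix.of (fun l i : Fin n => ((D⁻¹ : Kˣ) : K) * auxC' f ft B i l) * Bᵀ = 1 := by
    ext l j
    rw [Matrix.mul_apply, Matrix.one_apply]
    simp only [Matrix.of_apply, Matrix.transpose_apply]
    calc ∑ i : Fin n, ((D⁻¹ : Kˣ) : K) * auxC' f ft B i l * B j i
        = ((D⁻¹ : Kˣ) : K) * ∑ i : Fin n, auxC' f ft B i l * B j i := by
          rw [Finset.mul_sum]
          refine Finset.sum_congr rfl fun i _ => ?_
          rw [mul_assoc]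
      _ = ((D⁻¹ : Kˣ) : K) * ((if j = l then (1:k) else 0) • (D : K)) := by rw [key2]
      _ = if l = j then 1 else 0 := by
          rw [mul_smul_comm, hDiDv]
          by_cases h : l = j
          · subst h; simp
          · rw [if_neg (fun hh => h hh.symm), if_neg h, zero_smul]
  have hMB : M * Bᵀ = 1 := by
    have hNM : Matrix.of (fun l i : Fin n => ((D⁻¹ : Kˣ) : K) * auxC' f ft B i l) = M :=
      left_inv_eq_right_inv hNB hBM
    rw [← hNM]
    exact hNB
  exact ⟨⟨hAB, h3⟩, hBM, hMB⟩
end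

section
/- Let e, f : (Fin m → Fin n) → k be coefficient tensors, ẽ a polar form of e (i.e. Σ_{k⃗} ẽ_{i k_1⋯k_{m−1}} e_{k_1⋯k_{m−1} j} = δ_{ij}) and f̃ a polar form of f (i.e. Σ_{k⃗} f_{i k_1⋯k_{m−1}} f̃_{k_1⋯k_{m−1} j} = δ_{ij}). Let K be an associative unital k-algebra, U = (u_{ij}) an n×n matrix over K, and D_e, D_f units of K, satisfying for all j_1,…,j_m: Σ_{i_1,…,i_m} e_{i_1⋯i_m} u_{i_1j_1}⋯u_{i_mj_m} = e_{j_1⋯j_m}·D_e and Σ_{i_1,…,i_m} f_{i_1⋯i_m} u_{j_1i_1}⋯u_{j_mi_m} = f_{j_1⋯j_m}·D_f^{-1}. Define matrices C = (c_{ij}) and D' = (d_{ij}) over K by c_{ij} = Σ_{i_1,…,i_{m−1},j_1,…,j_{m−1}} D_e^{-1} ẽ_{i i_1⋯i_{m−1}} u_{j_1i_1}⋯u_{j_{m−1}i_{m−1}} e_{j_1⋯j_{m−1} j} and d_{ij} = Σ_{i_1,…,i_{m−1},j_1,…,j_{m−1}} f_{i i_1⋯i_{m−1}} u_{j_1i_1}⋯u_{j_{m−1}i_{m−1}}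 f̃_{j_1⋯j_{m−1} j} D_f. Then C·U = I_n = U·D' and C = D'; moreover C and D' do not depend on the choice of polar forms ẽ of e and f̃ of f. -/
open Matrix

/-- The matrix `C = (c_{ij})` with
`c_{ij} = Σ D_e⁻¹ ẽ_{i i_1⋯i_{m−1}} u_{j_1i_1}⋯u_{j_{m−1}i_{m−1}} e_{j_1⋯j_{m−1} j}`
(here `De` stands for the element `D_e⁻¹ ∈ K`). -/
def cMat {k K : Type*} [Field k] [Ring K] [Algebra k K] (m n : ℕ)
    (e et : (Fin (m + 1) → Fin n) → k) (U : Matrix (Fin n) (Fin n) K) (Deinv : K) :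
    Matrix (Fin n) (Fin n) K :=
  Matrix.of fun i j : Fin n =>
    ∑ iv : Fin m → Fin n, ∑ jv : Fin m → Fin n,
      (et (Fin.cons i iv) * e (Fin.snoc jv j)) •
        (Deinv * (List.ofFn fun t : Fin m => U (jv t) (iv t)).prod)

/-- The matrix `D' = (d_{ij})` with
`d_{ij} = Σ f_{i i_1⋯i_{m−1}} u_{j_1i_1}⋯u_{j_{m−1}i_{m−1}} f̃_{j_1⋯j_{m−1} j} D_f`. -/
def dMat {k K : Type*} [Field k] [Ring K] [Algebra k K] (m n : ℕ)
    (f ft : (Fin (m + 1) → Fin n) → k) (U : Matrix (Fin n) (Fin n) K) (Df : K) :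
    Matrix (Fin n) (Fin n) K :=
  Matrix.of fun i j : Fin n =>
    ∑ iv : Fin m → Fin n, ∑ jv : Fin m → Fin n,
      (f (Fin.cons i iv) * ft (Fin.snoc jv j)) •
        ((List.ofFn fun t : Fin m => U (jv t) (iv t)).prod * Df)


lemma sum_snoc_decomp {n m : ℕ} {M : Type*} [AddCommMonoid M]
    (g : (Fin (m + 1) → Fin n) → M) :
    ∑ w : Fin (m + 1) → Fin n, g w =
      ∑ jv : Fin m → Fin n, ∑ l : Fin n, g (Fin.snoc jv l) := by
  calc ∑ w : Fin (m + 1) → Fin n, g w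
      = ∑ p : Fin n × (Fin m → Fin n), g (Fin.snoc p.2 p.1) :=
        (Fintype.sum_equiv (Fin.snocEquiv (fun _ => Fin n)) _ _ (fun p => rfl)).symm
    _ = ∑ l : Fin n, ∑ jv : Fin m → Fin n, g (Fin.snoc jv l) := by
        rw [Fintype.sum_prod_type]
    _ = ∑ jv : Fin m → Fin n, ∑ l : Fin n, g (Fin.snoc jv l) := Finset.sum_comm

lemma sum_cons_decomp {n m : ℕ} {M : Type*} [AddCommMonoid M]
    (g : (Fin (m + 1) → Fin n) → M) :
    ∑ w : Fin (m + 1) → Fin n, g w =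
      ∑ l : Fin n, ∑ iv : Fin m → Fin n, g (Fin.cons l iv) := by
  calc ∑ w : Fin (m + 1) → Fin n, g w
      = ∑ p : Fin n × (Fin m → Fin n), g (Fin.cons p.1 p.2) :=
        (Fintype.sum_equiv (Fin.consEquiv (fun _ => Fin n)) _ _ (fun p => rfl)).symm
    _ = ∑ l : Fin n, ∑ iv : Fin m → Fin n, g (Fin.cons l iv) := by
        rw [Fintype.sum_prod_type]

lemma prod_snoc_split {n m : ℕ} {K : Type*} [Ring K] (U : Matrix (Fin n) (Fin n) K)
    (a c : Fin m → Fin n) (b d : Fin n) :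
    (List.ofFn fun t : Fin (m + 1) =>
        U ((Fin.snoc a b : Fin (m+1) → Fin n) t) ((Fin.snoc c d : Fin (m+1) → Fin n) t)).prod =
      (List.ofFn fun t : Fin m => U (a t) (c t)).prod * U b d := by
  rw [List.ofFn_succ']
  simp

lemma prod_cons_split {n m : ℕ} {K : Type*} [Ring K] (U : Matrix (Fin n) (Fin n) K)
    (a c : Fin m → Fin n) (b d : Fin n) :
    (List.ofFn fun t : Fin (m + 1) =>
        U ((Fin.cons b a : Fin (m+1) → Fin n) t) ((Fin.cons d c : Fin (m+1) → Fin n) t)).prod =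
      U b d * (List.ofFn fun t : Fin m => U (a t) (c t)).prod := by
  rw [List.ofFn_succ]
  simp

set_option maxHeartbeats 1000000 in
lemma cMul {k K : Type*} [Field k] [Ring K] [Algebra k K]
    (m n : ℕ) (e et : (Fin (m + 1) → Fin n) → k)
    (het : ∀ i j : Fin n,
      (∑ kv : Fin m → Fin n, et (Fin.cons i kv) * e (Fin.snoc kv j)) =
        if i = j then 1 else 0)
    (U : Matrix (Fin n) (Fin n) K) (De : Kˣ)
    (h1 : ∀ jv : Fin (m + 1) → Fin n,
      (∑ iv : Fin (m + 1) → Fin n,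
        e iv • (List.ofFn fun t : Fin (m + 1) => U (iv t) (jv t)).prod) =
        e jv • (De : K)) :
    cMat m n e et U ((De⁻¹ : Kˣ) : K) * U = 1 := by
  ext i j
  rw [Matrix.mul_apply]
  simp only [cMat, Matrix.of_apply]
  simp only [Finset.sum_mul]
  rw [Finset.sum_comm]
  have key : ∀ iv : Fin m → Fin n,
      (∑ l, ∑ jv : Fin m → Fin n,
        ((et (Fin.cons i iv) * e (Fin.snoc jv l)) •
          (((De⁻¹ : Kˣ) : K) * (List.ofFn fun t : Fin m => U (jv t) (iv t)).prod)) * U l j) =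
      (et (Fin.cons i iv) * e (Fin.snoc iv j)) • (1 : K) := by
    intro iv
    calc ∑ l, ∑ jv : Fin m → Fin n,
        ((et (Fin.cons i iv) * e (Fin.snoc jv l)) •
          (((De⁻¹ : Kˣ) : K) * (List.ofFn fun t : Fin m => U (jv t) (iv t)).prod)) * U l j
        = et (Fin.cons i iv) • (((De⁻¹ : Kˣ) : K) *
            ∑ l, ∑ jv : Fin m → Fin n,
              e (Fin.snoc jv l) •
                ((List.ofFn fun t : Fin m => U (jv t) (iv t)).prod * U l j)) := by
          rw [Finset.mul_sum, Finset.smul_sum]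
          refine Finset.sum_congr rfl fun l _ => ?_
          rw [Finset.mul_sum, Finset.smul_sum]
          refine Finset.sum_congr rfl fun jv _ => ?_
          rw [smul_mul_assoc, mul_smul, mul_assoc, ← mul_smul_comm]
      _ = et (Fin.cons i iv) • (((De⁻¹ : Kˣ) : K) * (e (Fin.snoc iv j) • (De : K))) := by
          congr 2
          rw [Finset.sum_comm]
          calc ∑ jv : Fin m → Fin n, ∑ l : Fin n,
              e (Fin.snoc jv l) •
                ((List.ofFn fun t : Fin m => U (jv t) (iv t)).prod * U l j)
              = ∑ jv : Fin m → Fin n, ∑ l : Fin n,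
                  e (Fin.snoc jv l) • (List.ofFn fun t : Fin (m + 1) =>
                    U ((Fin.snoc jv l : Fin (m + 1) → Fin n) t)
                      ((Fin.snoc iv j : Fin (m + 1) → Fin n) t)).prod := by
                refine Finset.sum_congr rfl fun jv _ => Finset.sum_congr rfl fun l _ => ?_
                rw [prod_snoc_split]
            _ = ∑ w : Fin (m + 1) → Fin n, e w • (List.ofFn fun t : Fin (m + 1) =>
                  U (w t) ((Fin.snoc iv j : Fin (m + 1) → Fin n) t)).prod :=
                (sum_snoc_decomp (fun w => e w • (List.ofFn fun t : Fin (m + 1) =>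
                  U (w t) ((Fin.snoc iv j : Fin (m + 1) → Fin n) t)).prod)).symm
            _ = e (Fin.snoc iv j) • (De : K) := h1 _
      _ = (et (Fin.cons i iv) * e (Fin.snoc iv j)) • (1 : K) := by
          rw [mul_smul_comm, smul_smul, Units.inv_mul]
  rw [Finset.sum_congr rfl fun iv _ => key iv, ← Finset.sum_smul, het i j]
  simp [Matrix.one_apply]

set_option maxHeartbeats 1000000 in
lemma dMul {k K : Type*} [Field k] [Ring K] [Algebra k K]
    (m n : ℕ) (f ft : (Fin (m + 1) → Fin n) → k)
    (hft : ∀ i j : Fin n,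
      (∑ kv : Fin m → Fin n, f (Fin.cons i kv) * ft (Fin.snoc kv j)) =
        if i = j then 1 else 0)
    (U : Matrix (Fin n) (Fin n) K) (Df : Kˣ)
    (h2 : ∀ jv : Fin (m + 1) → Fin n,
      (∑ iv : Fin (m + 1) → Fin n,
        f iv • (List.ofFn fun t : Fin (m + 1) => U (jv t) (iv t)).prod) =
        f jv • ((Df⁻¹ : Kˣ) : K)) :
    U * dMat m n f ft U (Df : K) = 1 := by
  ext i j
  rw [Matrix.mul_apply]
  simp only [dMat, Matrix.of_apply]
  simp only [Finset.mul_sum]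
  -- goal: ∑ l, ∑ iv, ∑ jv, U i l * ((f (cons l iv) * ft (snoc jv j)) • (P jv iv * Df)) = (1:Matrix _ _ K) i j
  rw [show (∑ l, ∑ iv : Fin m → Fin n, ∑ jv : Fin m → Fin n,
      U i l * ((f (Fin.cons l iv) * ft (Fin.snoc jv j)) •
        ((List.ofFn fun t : Fin m => U (jv t) (iv t)).prod * (Df : K)))) =
      ∑ jv : Fin m → Fin n, ∑ l, ∑ iv : Fin m → Fin n,
      U i l * ((f (Fin.cons l iv) * ft (Fin.snoc jv j)) •
        ((List.ofFn fun t : Fin m => U (jv t) (iv t)).prod * (Df : K))) from by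
    rw [Finset.sum_congr rfl fun l _ => (Finset.sum_comm :
      (∑ iv : Fin m → Fin n, ∑ jv : Fin m → Fin n,
        U i l * ((f (Fin.cons l iv) * ft (Fin.snoc jv j)) •
          ((List.ofFn fun t : Fin m => U (jv t) (iv t)).prod * (Df : K)))) = _)]
    exact Finset.sum_comm]
  have key : ∀ jv : Fin m → Fin n,
      (∑ l, ∑ iv : Fin m → Fin n,
        U i l * ((f (Fin.cons l iv) * ft (Fin.snoc jv j)) •
          ((List.ofFn fun t : Fin m => U (jv t) (iv t)).prod * (Df : K)))) =
      (f (Fin.cons i jv) * ft (Fin.snoc jv j)) • (1 : K) := by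
    intro jv
    calc ∑ l, ∑ iv : Fin m → Fin n,
        U i l * ((f (Fin.cons l iv) * ft (Fin.snoc jv j)) •
          ((List.ofFn fun t : Fin m => U (jv t) (iv t)).prod * (Df : K)))
        = ft (Fin.snoc jv j) • ((∑ l, ∑ iv : Fin m → Fin n,
            f (Fin.cons l iv) •
              (U i l * (List.ofFn fun t : Fin m => U (jv t) (iv t)).prod)) * (Df : K)) := by
          rw [Finset.sum_mul, Finset.smul_sum]
          refine Finset.sum_congr rfl fun l _ => ?_
          rw [Finset.sum_mul, Finset.smul_sum]
          refine Finset.sum_congr rfl fun iv _ => ?_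
          rw [mul_smul_comm, smul_mul_assoc, smul_smul,
            mul_comm (f (Fin.cons l iv)) (ft (Fin.snoc jv j)), mul_smul, ← mul_assoc,
            ← mul_smul]
      _ = ft (Fin.snoc jv j) • ((f (Fin.cons i jv) • ((Df⁻¹ : Kˣ) : K)) * (Df : K)) := by
          congr 2
          calc ∑ l, ∑ iv : Fin m → Fin n,
              f (Fin.cons l iv) •
                (U i l * (List.ofFn fun t : Fin m => U (jv t) (iv t)).prod)
              = ∑ l, ∑ iv : Fin m → Fin n,
                  f (Fin.cons l iv) • (List.ofFn fun t : Fin (m + 1) =>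
                    U ((Fin.cons i jv : Fin (m + 1) → Fin n) t)
                      ((Fin.cons l iv : Fin (m + 1) → Fin n) t)).prod := by
                refine Finset.sum_congr rfl fun l _ => Finset.sum_congr rfl fun iv _ => ?_
                rw [prod_cons_split]
            _ = ∑ w : Fin (m + 1) → Fin n, f w • (List.ofFn fun t : Fin (m + 1) =>
                  U ((Fin.cons i jv : Fin (m + 1) → Fin n) t) (w t)).prod :=
                (sum_cons_decomp (fun w => f w • (List.ofFn fun t : Fin (m + 1) =>
                  U ((Fin.cons i jv : Fin (m + 1) → Fin n) t) (w t)).prod)).symm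
            _ = f (Fin.cons i jv) • ((Df⁻¹ : Kˣ) : K) := h2 _
      _ = (f (Fin.cons i jv) * ft (Fin.snoc jv j)) • (1 : K) := by
          rw [smul_mul_assoc, Units.inv_mul, smul_smul,
            mul_comm (ft (Fin.snoc jv j)) (f (Fin.cons i jv))]
  rw [Finset.sum_congr rfl fun jv _ => key jv, ← Finset.sum_smul, hft i j]
  simp [Matrix.one_apply]

/-- (Cf. Lemma on the two-sided inverse of `U` in `H(e,f)`.)
Given the `H(e,f)`-type relations, the matrices `C` and `D'` built from polar forms
`ẽ` of `e` and `f̃` of `f` satisfy `C·U = I = U·D'`, `C = D'`, and they do not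
depend on the choice of polar forms. -/
theorem Hef_matrix_inverse {k K : Type*} [Field k] [Ring K] [Algebra k K]
    (m n : ℕ) (hm : 1 ≤ m) (hn : 1 ≤ n)
    (e f : (Fin (m + 1) → Fin n) → k)
    (et : (Fin (m + 1) → Fin n) → k)
    (het : ∀ i j : Fin n,
      (∑ kv : Fin m → Fin n, et (Fin.cons i kv) * e (Fin.snoc kv j)) =
        if i = j then 1 else 0)
    (ft : (Fin (m + 1) → Fin n) → k)
    (hft : ∀ i j : Fin n,
      (∑ kv : Fin m → Fin n, f (Fin.cons i kv) * ft (Fin.snoc kv j)) =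
        if i = j then 1 else 0)
    (U : Matrix (Fin n) (Fin n) K) (De Df : Kˣ)
    (h1 : ∀ jv : Fin (m + 1) → Fin n,
      (∑ iv : Fin (m + 1) → Fin n,
        e iv • (List.ofFn fun t : Fin (m + 1) => U (iv t) (jv t)).prod) =
        e jv • (De : K))
    (h2 : ∀ jv : Fin (m + 1) → Fin n,
      (∑ iv : Fin (m + 1) → Fin n,
        f iv • (List.ofFn fun t : Fin (m + 1) => U (jv t) (iv t)).prod) =
        f jv • ((Df⁻¹ : Kˣ) : K)) :
    (cMat m n e et U ((De⁻¹ : Kˣ) : K) * U = 1 ∧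
      U * dMat m n f ft U (Df : K) = 1) ∧
    cMat m n e et U ((De⁻¹ : Kˣ) : K) = dMat m n f ft U (Df : K) ∧
    (∀ et' : (Fin (m + 1) → Fin n) → k,
      (∀ i j : Fin n,
        (∑ kv : Fin m → Fin n, et' (Fin.cons i kv) * e (Fin.snoc kv j)) =
          if i = j then 1 else 0) →
      cMat m n e et' U ((De⁻¹ : Kˣ) : K) = cMat m n e et U ((De⁻¹ : Kˣ) : K)) ∧
    (∀ ft' : (Fin (m + 1) → Fin n) → k,
      (∀ i j : Fin n,
        (∑ kv : Fin m → Fin n, f (Fin.cons i kv) * ft' (Fin.snoc kv j)) =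
          if i = j then 1 else 0) →
      dMat m n f ft' U (Df : K) = dMat m n f ft U (Df : K)) := by
  have hCU := cMul m n e et het U De h1
  have hUD := dMul m n f ft hft U Df h2
  have hCD : cMat m n e et U ((De⁻¹ : Kˣ) : K) = dMat m n f ft U (Df : K) :=
    left_inv_eq_right_inv hCU hUD
  refine ⟨⟨hCU, hUD⟩, hCD, ?_, ?_⟩
  · intro et' het'
    exact (left_inv_eq_right_inv (cMul m n e et' het' U De h1) hUD).trans hCD.symm
  · intro ft' hft'
    exact (left_inv_eq_right_inv hCU (dMul m n f ft' hft' U Df h2)).symm.trans hCD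
end

section
/- Let e, f : (Fin m → Fin n) → k be coefficient tensors. Let K be an associative unital k-algebra, X = (x_{ij}) an n×n matrix over K, and d, d' units of K, satisfying for all j_1,…,j_m: Σ_{i_1,…,i_m} e_{i_1⋯i_m} x_{i_1j_1}⋯x_{i_mj_m} = e_{j_1⋯j_m}·d and Σ_{i_1,…,i_m} f_{i_1⋯i_m} x_{j_1i_1}⋯x_{j_mi_m} = f_{j_1⋯j_m}·d'. If the scalar e⊙f := Σ_{i_1,…,i_m} e_{i_1⋯i_m} f_{i_1⋯i_m} is nonzero, then d = d' in K. -/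
/-- If `e⊙f ≠ 0` then the two quantum determinants coincide:
under the `H(e,f)`-type relations with units `d, d'`, one has `d = d'` in `K`. -/
theorem odot_ne_zero_implies_det_eq {k K : Type*} [Field k] [Ring K] [Algebra k K]
    (m n : ℕ) (hm : 1 ≤ m) (hn : 1 ≤ n)
    (e f : (Fin (m + 1) → Fin n) → k)
    (X : Matrix (Fin n) (Fin n) K) (d d' : Kˣ)
    (h1 : ∀ jv : Fin (m + 1) → Fin n,
      (∑ iv : Fin (m + 1) → Fin n,
        e iv • (List.ofFn fun t : Fin (m + 1) => X (iv t) (jv t)).prod) =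
        e jv • (d : K))
    (h2 : ∀ jv : Fin (m + 1) → Fin n,
      (∑ iv : Fin (m + 1) → Fin n,
        f iv • (List.ofFn fun t : Fin (m + 1) => X (jv t) (iv t)).prod) =
        f jv • (d' : K))
    (hodot : (∑ iv : Fin (m + 1) → Fin n, e iv * f iv) ≠ 0) :
    (d : K) = (d' : K) := by
  refine smul_right_injective K hodot ?_
  calc (∑ iv : Fin (m + 1) → Fin n, e iv * f iv) • (d : K)
      = ∑ jv : Fin (m + 1) → Fin n, f jv • (e jv • (d : K)) := by
        rw [Finset.sum_smul]
        refine Finset.sum_congr rfl fun jv _ => ?_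
        rw [mul_comm, mul_smul]
    _ = ∑ jv : Fin (m + 1) → Fin n, f jv •
          (∑ iv : Fin (m + 1) → Fin n,
            e iv • (List.ofFn fun t : Fin (m + 1) => X (iv t) (jv t)).prod) := by
        refine Finset.sum_congr rfl fun jv _ => ?_
        rw [h1]
    _ = ∑ iv : Fin (m + 1) → Fin n, e iv •
          (∑ jv : Fin (m + 1) → Fin n,
            f jv • (List.ofFn fun t : Fin (m + 1) => X (iv t) (jv t)).prod) := by
        simp only [Finset.smul_sum]
        rw [Finset.sum_comm]
        exact Finset.sum_congr rfl fun iv _ => Finset.sum_congr rfl fun jv _ =>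
          smul_comm _ _ _
    _ = ∑ iv : Fin (m + 1) → Fin n, e iv • (f iv • (d' : K)) := by
        refine Finset.sum_congr rfl fun iv _ => ?_
        rw [h2]
    _ = (∑ iv : Fin (m + 1) → Fin n, e iv * f iv) • (d' : K) := by
        rw [Finset.sum_smul]
        exact Finset.sum_congr rfl fun iv _ => (mul_smul _ _ _).symm
end

section
/- Let e, f : (Fin m → Fin n) → k be coefficient tensors. Let K be an associative unital k-algebra, X = (x_{ij}) an n×n matrix over K, and d, d' units of K, satisfying for all j_1,…,j_m: Σ_{i_1,…,i_m} e_{i_1⋯i_m} x_{i_1j_1}⋯x_{i_mj_m} = e_{j_1⋯j_m}·d and Σ_{i_1,…,i_m} f_{i_1⋯i_m} x_{j_1i_1}⋯x_{j_mi_m} = f_{j_1⋯j_m}·d'. Then for all i, j ∈ Fin n: (i) Σ_k x_{ik}·(f⋆e)_{kj}·d = Σ_k d'·(f⋆e)_{ik}·x_{kj}, and (ii) Σ_k x_{ik}·(e⋆f)_{jk}·d'^{-1} = Σ_k d^{-1}·(e⋆f)_{ki}·x_{kj} (that is, X·(f⋆e)·d = d'·(f⋆e)·X and X·(e⋆f)ᵀ·d'^{-1}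 = d^{-1}·(e⋆f)ᵀ·X). -/
private lemma sum_cons_aux {m n : ℕ} {M : Type*} [AddCommMonoid M]
    (g : (Fin (m + 1) → Fin n) → M) :
    (∑ iv : Fin (m + 1) → Fin n, g iv)
      = ∑ a : Fin n, ∑ c : Fin m → Fin n, g (Fin.cons a c) := by
  rw [← Equiv.sum_comp (Fin.consEquiv fun _ => Fin n) g, Fintype.sum_prod_type]
  rfl

private lemma sum_snoc_aux {m n : ℕ} {M : Type*} [AddCommMonoid M]
    (g : (Fin (m + 1) → Fin n) → M) :
    (∑ iv : Fin (m + 1) → Fin n, g iv)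
      = ∑ a : Fin n, ∑ c : Fin m → Fin n, g (Fin.snoc c a) := by
  rw [← Equiv.sum_comp (Fin.snocEquiv fun _ => Fin n) g, Fintype.sum_prod_type]
  rfl

private lemma sum4_comm {M α β : Type*} [AddCommMonoid M] [Fintype α] [Fintype β]
    (F : α → β → α → β → M) :
    (∑ x : α, ∑ y : β, ∑ z : α, ∑ w : β, F x y z w)
      = ∑ z : α, ∑ w : β, ∑ x : α, ∑ y : β, F x y z w := by
  calc (∑ x : α, ∑ y : β, ∑ z : α, ∑ w : β, F x y z w)
      = ∑ x : α, ∑ z : α, ∑ y : β, ∑ w : β, F x y z w :=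
        Finset.sum_congr rfl fun x _ => Finset.sum_comm
    _ = ∑ z : α, ∑ x : α, ∑ y : β, ∑ w : β, F x y z w := Finset.sum_comm
    _ = ∑ z : α, ∑ x : α, ∑ w : β, ∑ y : β, F x y z w :=
        Finset.sum_congr rfl fun z _ => Finset.sum_congr rfl fun x _ => Finset.sum_comm
    _ = ∑ z : α, ∑ w : β, ∑ x : α, ∑ y : β, F x y z w :=
        Finset.sum_congr rfl fun z _ => Finset.sum_comm

/-- Under the `H(e,f)`-type relations with units `d, d'`, the matrix
`X` intertwines the star products: `X·(f⋆e)·d = d'·(f⋆e)·X` and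
`X·(e⋆f)ᵀ·d'⁻¹ = d⁻¹·(e⋆f)ᵀ·X`, where
`(e⋆f)_{ij} = Σ e_{i i_1⋯i_{m−1}} f_{i_1⋯i_{m−1} j}` and similarly for `f⋆e`. -/
theorem star_intertwining {k K : Type*} [Field k] [Ring K] [Algebra k K]
    (m n : ℕ) (hm : 1 ≤ m) (hn : 1 ≤ n)
    (e f : (Fin (m + 1) → Fin n) → k)
    (X : Matrix (Fin n) (Fin n) K) (d d' : Kˣ)
    (h1 : ∀ jv : Fin (m + 1) → Fin n,
      (∑ iv : Fin (m + 1) → Fin n,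
        e iv • (List.ofFn fun t : Fin (m + 1) => X (iv t) (jv t)).prod) =
        e jv • (d : K))
    (h2 : ∀ jv : Fin (m + 1) → Fin n,
      (∑ iv : Fin (m + 1) → Fin n,
        f iv • (List.ofFn fun t : Fin (m + 1) => X (jv t) (iv t)).prod) =
        f jv • (d' : K)) :
    (∀ i j : Fin n,
      (∑ kk : Fin n,
        (∑ kv : Fin m → Fin n, f (Fin.cons kk kv) * e (Fin.snoc kv j)) •
          (X i kk * (d : K))) =
      ∑ kk : Fin n,
        (∑ kv : Fin m → Fin n, f (Fin.cons i kv) * e (Fin.snoc kv kk)) •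
          ((d' : K) * X kk j)) ∧
    (∀ i j : Fin n,
      (∑ kk : Fin n,
        (∑ kv : Fin m → Fin n, e (Fin.cons j kv) * f (Fin.snoc kv kk)) •
          (X i kk * ((d'⁻¹ : Kˣ) : K))) =
      ∑ kk : Fin n,
        (∑ kv : Fin m → Fin n, e (Fin.cons kk kv) * f (Fin.snoc kv i)) •
          (((d⁻¹ : Kˣ) : K) * X kk j)) := by
  -- `h1` in snoc-split (contraction) form
  have h1s : ∀ (c : Fin m → Fin n) (j : Fin n),
      (∑ a : Fin n, ∑ kv : Fin m → Fin n, e (Fin.snoc kv a) •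
        ((List.ofFn fun s : Fin m => X (kv s) (c s)).prod * X a j))
        = e (Fin.snoc c j) • (d : K) := by
    intro c j
    have h := h1 (Fin.snoc c j)
    rw [sum_snoc_aux] at h
    rw [← h]
    refine Finset.sum_congr rfl fun a _ => Finset.sum_congr rfl fun kv _ => ?_
    congr 1
    rw [List.ofFn_succ', List.prod_concat]
    simp
  -- `h2` in cons-split (expansion) form
  have h2c : ∀ (i : Fin n) (kv : Fin m → Fin n),
      f (Fin.cons i kv) • (d' : K)
        = ∑ a : Fin n, ∑ c : Fin m → Fin n, f (Fin.cons a c) •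
            (X i a * (List.ofFn fun s : Fin m => X (kv s) (c s)).prod) := by
    intro i kv
    have h := h2 (Fin.cons i kv)
    rw [sum_cons_aux] at h
    rw [← h]
    refine Finset.sum_congr rfl fun a _ => Finset.sum_congr rfl fun c _ => ?_
    congr 1
    rw [List.ofFn_succ, List.prod_cons]
    simp
  -- `h1` in cons-split (expansion) form
  have h1c : ∀ (j : Fin n) (c : Fin m → Fin n),
      e (Fin.cons j c) • (d : K)
        = ∑ a : Fin n, ∑ av : Fin m → Fin n, e (Fin.cons a av) •
            (X a j * (List.ofFn fun s : Fin m => X (av s) (c s)).prod) := by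
    intro j c
    have h := h1 (Fin.cons j c)
    rw [sum_cons_aux] at h
    rw [← h]
    refine Finset.sum_congr rfl fun a _ => Finset.sum_congr rfl fun av _ => ?_
    congr 1
    rw [List.ofFn_succ, List.prod_cons]
    simp
  -- `h2` in snoc-split (contraction) form
  have h2s : ∀ (c : Fin m → Fin n) (i : Fin n),
      (∑ a : Fin n, ∑ kv : Fin m → Fin n, f (Fin.snoc kv a) •
        ((List.ofFn fun s : Fin m => X (c s) (kv s)).prod * X i a))
        = f (Fin.snoc c i) • (d' : K) := by
    intro c i
    have h := h2 (Fin.snoc c i)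
    rw [sum_snoc_aux] at h
    rw [← h]
    refine Finset.sum_congr rfl fun a _ => Finset.sum_congr rfl fun kv _ => ?_
    congr 1
    rw [List.ofFn_succ', List.prod_concat]
    simp
  constructor
  · -- part (i)
    intro i j
    calc (∑ kk : Fin n,
        (∑ kv : Fin m → Fin n, f (Fin.cons kk kv) * e (Fin.snoc kv j)) •
          (X i kk * (d : K)))
        = ∑ kk : Fin n, ∑ kv : Fin m → Fin n,
            f (Fin.cons kk kv) • (X i kk * (e (Fin.snoc kv j) • (d : K))) := by
          simp only [Finset.sum_smul, mul_smul, mul_smul_comm]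
      _ = ∑ kk : Fin n, ∑ kv : Fin m → Fin n,
            f (Fin.cons kk kv) • (X i kk *
              (∑ a : Fin n, ∑ av : Fin m → Fin n, e (Fin.snoc av a) •
                ((List.ofFn fun s : Fin m => X (av s) (kv s)).prod * X a j))) := by
          refine Finset.sum_congr rfl fun kk _ => Finset.sum_congr rfl fun kv _ => ?_
          rw [h1s kv j]
      _ = ∑ kk : Fin n, ∑ kv : Fin m → Fin n, ∑ a : Fin n, ∑ av : Fin m → Fin n,
            (f (Fin.cons kk kv) * e (Fin.snoc av a)) •
              (X i kk * ((List.ofFn fun s : Fin m => X (av s) (kv s)).prod * X a j)) := by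
          simp only [Finset.mul_sum, mul_smul_comm, Finset.smul_sum, smul_smul]
      _ = ∑ a : Fin n, ∑ av : Fin m → Fin n, ∑ kk : Fin n, ∑ kv : Fin m → Fin n,
            (f (Fin.cons kk kv) * e (Fin.snoc av a)) •
              (X i kk * ((List.ofFn fun s : Fin m => X (av s) (kv s)).prod * X a j)) :=
          sum4_comm _
      _ = ∑ a : Fin n, ∑ av : Fin m → Fin n,
            e (Fin.snoc av a) •
              ((∑ kk : Fin n, ∑ kv : Fin m → Fin n, f (Fin.cons kk kv) •
                  (X i kk * (List.ofFn fun s : Fin m => X (av s) (kv s)).prod)) * X a j) := by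
          refine Finset.sum_congr rfl fun a _ => Finset.sum_congr rfl fun av _ => ?_
          simp only [Finset.sum_mul, Finset.smul_sum, smul_mul_assoc, smul_smul]
          refine Finset.sum_congr rfl fun kk _ => Finset.sum_congr rfl fun kv _ => ?_
          rw [mul_comm (e _) (f _), mul_assoc]
      _ = ∑ a : Fin n, ∑ av : Fin m → Fin n,
            e (Fin.snoc av a) • ((f (Fin.cons i av) • (d' : K)) * X a j) := by
          refine Finset.sum_congr rfl fun a _ => Finset.sum_congr rfl fun av _ => ?_
          rw [← h2c i av]
      _ = ∑ kk : Fin n,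
            (∑ kv : Fin m → Fin n, f (Fin.cons i kv) * e (Fin.snoc kv kk)) •
              ((d' : K) * X kk j) := by
          simp only [Finset.sum_smul, smul_mul_assoc, smul_smul]
          refine Finset.sum_congr rfl fun a _ => Finset.sum_congr rfl fun av _ => ?_
          rw [mul_comm (e _) (f _)]
  · -- part (ii)
    intro i j
    have key : (∑ kk : Fin n,
        (∑ kv : Fin m → Fin n, e (Fin.cons j kv) * f (Fin.snoc kv kk)) •
          ((d : K) * X i kk)) =
        ∑ kk : Fin n,
          (∑ kv : Fin m → Fin n, e (Fin.cons kk kv) * f (Fin.snoc kv i)) •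
            (X kk j * (d' : K)) := by
      calc (∑ kk : Fin n,
          (∑ kv : Fin m → Fin n, e (Fin.cons j kv) * f (Fin.snoc kv kk)) •
            ((d : K) * X i kk))
          = ∑ kk : Fin n, ∑ kv : Fin m → Fin n,
              f (Fin.snoc kv kk) • ((e (Fin.cons j kv) • (d : K)) * X i kk) := by
            simp only [Finset.sum_smul]
            refine Finset.sum_congr rfl fun kk _ => Finset.sum_congr rfl fun kv _ => ?_
            rw [smul_mul_assoc, mul_comm (e _) (f _), mul_smul]
        _ = ∑ kk : Fin n, ∑ kv : Fin m → Fin n,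
              f (Fin.snoc kv kk) •
                ((∑ a : Fin n, ∑ av : Fin m → Fin n, e (Fin.cons a av) •
                  (X a j * (List.ofFn fun s : Fin m => X (av s) (kv s)).prod)) * X i kk) := by
            refine Finset.sum_congr rfl fun kk _ => Finset.sum_congr rfl fun kv _ => ?_
            rw [h1c j kv]
        _ = ∑ kk : Fin n, ∑ kv : Fin m → Fin n, ∑ a : Fin n, ∑ av : Fin m → Fin n,
              (f (Fin.snoc kv kk) * e (Fin.cons a av)) •
                (X a j * ((List.ofFn fun s : Fin m => X (av s) (kv s)).prod * X i kk)) := by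
            simp only [Finset.sum_mul, smul_mul_assoc, Finset.smul_sum, smul_smul, mul_assoc]
        _ = ∑ a : Fin n, ∑ av : Fin m → Fin n, ∑ kk : Fin n, ∑ kv : Fin m → Fin n,
              (f (Fin.snoc kv kk) * e (Fin.cons a av)) •
                (X a j * ((List.ofFn fun s : Fin m => X (av s) (kv s)).prod * X i kk)) :=
            sum4_comm _
        _ = ∑ a : Fin n, ∑ av : Fin m → Fin n,
              e (Fin.cons a av) •
                (X a j * (∑ kk : Fin n, ∑ kv : Fin m → Fin n, f (Fin.snoc kv kk) •
                  ((List.ofFn fun s : Fin m => X (av s) (kv s)).prod * X i kk))) := by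
            refine Finset.sum_congr rfl fun a _ => Finset.sum_congr rfl fun av _ => ?_
            simp only [Finset.mul_sum, mul_smul_comm, Finset.smul_sum, smul_smul]
            refine Finset.sum_congr rfl fun kk _ => Finset.sum_congr rfl fun kv _ => ?_
            rw [mul_comm (e _) (f _)]
        _ = ∑ a : Fin n, ∑ av : Fin m → Fin n,
              e (Fin.cons a av) • (X a j * (f (Fin.snoc av i) • (d' : K))) := by
            refine Finset.sum_congr rfl fun a _ => Finset.sum_congr rfl fun av _ => ?_
            rw [h2s av i]
        _ = ∑ kk : Fin n,
              (∑ kv : Fin m → Fin n, e (Fin.cons kk kv) * f (Fin.snoc kv i)) •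
                (X kk j * (d' : K)) := by
            simp only [Finset.sum_smul, mul_smul_comm, smul_smul]
    calc (∑ kk : Fin n,
        (∑ kv : Fin m → Fin n, e (Fin.cons j kv) * f (Fin.snoc kv kk)) •
          (X i kk * ((d'⁻¹ : Kˣ) : K)))
        = ((d⁻¹ : Kˣ) : K) * (∑ kk : Fin n,
            (∑ kv : Fin m → Fin n, e (Fin.cons j kv) * f (Fin.snoc kv kk)) •
              ((d : K) * X i kk)) * ((d'⁻¹ : Kˣ) : K) := by
          rw [Finset.mul_sum, Finset.sum_mul]
          refine Finset.sum_congr rfl fun kk _ => ?_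
          rw [mul_smul_comm, smul_mul_assoc]
          congr 1
          simp [← mul_assoc]
      _ = ((d⁻¹ : Kˣ) : K) * (∑ kk : Fin n,
            (∑ kv : Fin m → Fin n, e (Fin.cons kk kv) * f (Fin.snoc kv i)) •
              (X kk j * (d' : K))) * ((d'⁻¹ : Kˣ) : K) := by rw [key]
      _ = ∑ kk : Fin n,
            (∑ kv : Fin m → Fin n, e (Fin.cons kk kv) * f (Fin.snoc kv i)) •
              (((d⁻¹ : Kˣ) : K) * X kk j) := by
          rw [Finset.mul_sum, Finset.sum_mul]
          refine Finset.sum_congr rfl fun kk _ => ?_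
          rw [mul_smul_comm, smul_mul_assoc]
          congr 1
          simp [mul_assoc]
end

section
/- Let e, f : (Fin m → Fin n) → k be coefficient tensors. Let K be an associative unital k-algebra, X = (x_{ij}) an n×n matrix over K, and d, d' units of K, satisfying for all j_1,…,j_m: Σ_{i_1,…,i_m} e_{i_1⋯i_m} x_{i_1j_1}⋯x_{i_mj_m} = e_{j_1⋯j_m}·d and Σ_{i_1,…,i_m} f_{i_1⋯i_m} x_{j_1i_1}⋯x_{j_mi_m} = f_{j_1⋯j_m}·d'. Assume that the entries x_{ij} generate K as a k-algebra (Algebra.adjoin of the set of entries equals K), that e⊙f := Σ_{i_1,…,i_m} e_{i_1⋯i_m} f_{i_1⋯i_m} ≠ 0, and that either f⋆e or e⋆f equals λ·I_n for some nonzero λ ∈ k. Then d = d' and d lies in the center of K. -/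
/-!
Write `P = X^{⊗m}` for the Kronecker power of `X`, indexed by `m`-tuples. The hypotheses say
that `e` is a left and `f` a right eigentensor of `X^{⊗(m+1)}`, with eigenvalues `d` and `d'`;
evaluating `eᵀ X^{⊗(m+1)} f` in two ways gives `(e⊙f) d = (e⊙f) d'`, hence `d = d'`.

Splitting off the first or the last tensor factor, `X^{⊗(m+1)} = X ⊗ P = P ⊗ X`, turns the
eigentensor relations into identities of rectangular matrices: for `F i c = f (i, c)` and
`E c j = e (c, j)` one gets `X F Pᵀ = F d'` and `Pᵀ E X = E d`, while `F E = f⋆e`. Associativity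
then gives `X (F E) d = d' (F E) X`, i.e. `λ X d = λ d' X`. The case `e⋆f = λ I` is the same
computation with `Xᵀ` in place of `X`. So `d` commutes with the generators `x_{ij}` of `K`.
-/

open Matrix Finset

section KroneckerPower

variable {K : Type*} [Ring K] {n : ℕ}

def kroneckerPower (X : Matrix (Fin n) (Fin n) K) (m : ℕ) :
    Matrix (Fin m → Fin n) (Fin m → Fin n) K :=
  of fun iv jv => (List.ofFn fun t => X (iv t) (jv t)).prod

variable (X : Matrix (Fin n) (Fin n) K) {m : ℕ} (i j : Fin n) (a c : Fin m → Fin n)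

lemma kroneckerPower_cons_cons :
    kroneckerPower X (m + 1) (Fin.cons i a) (Fin.cons j c) = X i j * kroneckerPower X m a c := by
  simp [kroneckerPower, List.ofFn_succ]

lemma kroneckerPower_snoc_snoc :
    kroneckerPower X (m + 1) (Fin.snoc a i) (Fin.snoc c j) = kroneckerPower X m a c * X i j := by
  simp only [kroneckerPower, of_apply, List.ofFn_succ', List.prod_concat]
  simp

end KroneckerPower

section PiFinSucc

variable {α M : Type*} [Fintype α] [AddCommMonoid M] {m : ℕ}

lemma sum_pi_fin_succ_cons (F : (Fin (m + 1) → α) → M) :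
    ∑ v, F v = ∑ i, ∑ c, F (Fin.cons i c) := by
  rw [← (Fin.consEquiv fun _ => α).sum_comp F, Fintype.sum_prod_type]
  rfl

lemma sum_pi_fin_succ_snoc (F : (Fin (m + 1) → α) → M) :
    ∑ v, F v = ∑ i, ∑ c, F (Fin.snoc c i) := by
  rw [← (Fin.snocEquiv fun _ => α).sum_comp F, Fintype.sum_prod_type]
  rfl

end PiFinSucc

section MatrixAlgebra

variable {k K : Type*} [Field k] [Ring K] [Algebra k K]

lemma map_algebraMap_mul_scalar {ι κ : Type*} [Fintype ι] [Fintype κ] [DecidableEq ι]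
    [DecidableEq κ] (M : Matrix ι κ k) (d : K) :
    M.map (algebraMap k K) * scalar κ d = scalar ι d * M.map (algebraMap k K) := by
  ext i j
  simp [Algebra.commutes]

lemma map_algebraMap_mul_map_algebraMap {ι κ : Type*} [Fintype ι] [Fintype κ] [DecidableEq ι]
    {A : Matrix ι κ k} {B : Matrix κ ι k} {lam : k} (h : A * B = lam • 1) :
    A.map (algebraMap k K) * B.map (algebraMap k K) = algebraMap k (Matrix ι ι K) lam := by
  rw [← Matrix.map_mul, h, ← Algebra.algebraMap_eq_smul_one]
  exact map_algebraMap lam _ (map_zero _) rfl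

lemma eq_of_mul_algebraMap_mul_eq {lam : k} (hlam : lam ≠ 0) {x y z w : K}
    (h : x * algebraMap k K lam * y = z * algebraMap k K lam * w) :
    x * y = z * w := by
  simp only [mul_assoc, ← Algebra.smul_def, mul_smul_comm] at h
  exact smul_right_injective K hlam h

end MatrixAlgebra

lemma mul_mul_mul_eq_of_mul_mul_eq {R ι κ : Type*} [NonUnitalSemiring R] [Fintype ι] [Fintype κ]
    {A D : Matrix ι ι R} {Q D' : Matrix κ κ R} {F : Matrix ι κ R} {E : Matrix κ ι R}
    (hF : A * F * Q = F * D') (hE : Q * E * A = E * D) :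
    A * (F * E) * D = F * D' * E * A := by
  rw [← hF, Matrix.mul_assoc (A * F * Q), Matrix.mul_assoc (A * F), ← Matrix.mul_assoc Q, hE]
  simp only [Matrix.mul_assoc]

section Eigentensors

variable {k K : Type*} [Field k] [Ring K] [Algebra k K] {n : ℕ}

def IsLeftEigentensor (X : Matrix (Fin n) (Fin n) K) {m : ℕ} (e : (Fin m → Fin n) → k) (d : K) :
    Prop :=
  ∀ jv, ∑ iv, e iv • kroneckerPower X m iv jv = e jv • d

def IsRightEigentensor (X : Matrix (Fin n) (Fin n) K) {m : ℕ} (f : (Fin m → Fin n) → k) (d : K) :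
    Prop :=
  ∀ iv, ∑ jv, f jv • kroneckerPower X m iv jv = f iv • d

variable {X : Matrix (Fin n) (Fin n) K} {d d' : K}

lemma dotProduct_smul_eq_of_eigentensors {m : ℕ} {e f : (Fin m → Fin n) → k}
    (he : IsLeftEigentensor X e d) (hf : IsRightEigentensor X f d') :
    (e ⬝ᵥ f) • d = (e ⬝ᵥ f) • d' :=
  calc (e ⬝ᵥ f) • d = ∑ jv, f jv • (e jv • d) := by
        simp only [dotProduct, sum_smul, smul_smul, mul_comm]
    _ = ∑ jv, f jv • ∑ iv, e iv • kroneckerPower X m iv jv :=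
        sum_congr rfl fun jv _ => by rw [he jv]
    _ = ∑ iv, e iv • ∑ jv, f jv • kroneckerPower X m iv jv := by
        simp only [smul_sum, smul_smul, mul_comm]
        exact sum_comm
    _ = ∑ iv, e iv • (f iv • d') := sum_congr rfl fun iv _ => by rw [hf iv]
    _ = (e ⬝ᵥ f) • d' := by simp only [dotProduct, sum_smul, smul_smul]

lemma eq_of_eigentensors {m : ℕ} {e f : (Fin m → Fin n) → k}
    (he : IsLeftEigentensor X e d) (hf : IsRightEigentensor X f d') (hef : e ⬝ᵥ f ≠ 0) :
    d = d' :=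
  smul_right_injective K hef (dotProduct_smul_eq_of_eigentensors he hf)

def headMatrix {m : ℕ} (f : (Fin (m + 1) → Fin n) → k) : Matrix (Fin n) (Fin m → Fin n) k :=
  of fun i c => f (Fin.cons i c)

def lastMatrix {m : ℕ} (e : (Fin (m + 1) → Fin n) → k) : Matrix (Fin m → Fin n) (Fin n) k :=
  of fun c j => e (Fin.snoc c j)

variable {m : ℕ} {e f : (Fin (m + 1) → Fin n) → k}

lemma IsRightEigentensor.mul_headMatrix_mul_transpose (hf : IsRightEigentensor X f d') :
    X * (headMatrix f).map (algebraMap k K) * (kroneckerPower X m)ᵀ =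
      (headMatrix f).map (algebraMap k K) * scalar (Fin m → Fin n) d' := by
  ext i a
  calc (X * (headMatrix f).map (algebraMap k K) * (kroneckerPower X m)ᵀ) i a
      = ∑ j, ∑ c, f (Fin.cons j c) • kroneckerPower X (m + 1) (Fin.cons i a) (Fin.cons j c) := by
        simp only [mul_apply, sum_mul, transpose_apply, map_apply, headMatrix, of_apply,
          kroneckerPower_cons_cons, Algebra.smul_def, mul_assoc, Algebra.left_comm]
        exact sum_comm
    _ = f (Fin.cons i a) • d' := by rw [← hf (Fin.cons i a), sum_pi_fin_succ_cons]
    _ = _ := by simp [headMatrix, Algebra.smul_def]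

lemma IsLeftEigentensor.transpose_mul_lastMatrix_mul (he : IsLeftEigentensor X e d) :
    (kroneckerPower X m)ᵀ * (lastMatrix e).map (algebraMap k K) * X =
      (lastMatrix e).map (algebraMap k K) * scalar (Fin n) d := by
  ext c j
  calc ((kroneckerPower X m)ᵀ * (lastMatrix e).map (algebraMap k K) * X) c j
      = ∑ i, ∑ a, e (Fin.snoc a i) • kroneckerPower X (m + 1) (Fin.snoc a i) (Fin.snoc c j) := by
        simp only [mul_apply, sum_mul, transpose_apply, map_apply, lastMatrix, of_apply,
          kroneckerPower_snoc_snoc, Algebra.smul_def, mul_assoc, Algebra.left_comm]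
    _ = e (Fin.snoc c j) • d := by rw [← he (Fin.snoc c j), sum_pi_fin_succ_snoc]
    _ = _ := by simp [lastMatrix, Algebra.smul_def]

lemma IsLeftEigentensor.transpose_mul_headMatrix_mul (he : IsLeftEigentensor X e d) :
    Xᵀ * (headMatrix e).map (algebraMap k K) * kroneckerPower X m =
      (headMatrix e).map (algebraMap k K) * scalar (Fin m → Fin n) d := by
  ext j c
  calc (Xᵀ * (headMatrix e).map (algebraMap k K) * kroneckerPower X m) j c
      = ∑ i, ∑ a, e (Fin.cons i a) • kroneckerPower X (m + 1) (Fin.cons i a) (Fin.cons j c) := by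
        simp only [mul_apply, sum_mul, transpose_apply, map_apply, headMatrix, of_apply,
          kroneckerPower_cons_cons, Algebra.smul_def, mul_assoc, Algebra.left_comm]
        exact sum_comm
    _ = e (Fin.cons j c) • d := by rw [← he (Fin.cons j c), sum_pi_fin_succ_cons]
    _ = _ := by simp [headMatrix, Algebra.smul_def]

lemma IsRightEigentensor.mul_lastMatrix_mul_transpose (hf : IsRightEigentensor X f d') :
    kroneckerPower X m * (lastMatrix f).map (algebraMap k K) * Xᵀ =
      (lastMatrix f).map (algebraMap k K) * scalar (Fin n) d' := by
  ext a i
  calc (kroneckerPower X m * (lastMatrix f).map (algebraMap k K) * Xᵀ) a i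
      = ∑ j, ∑ c, f (Fin.snoc c j) • kroneckerPower X (m + 1) (Fin.snoc a i) (Fin.snoc c j) := by
        simp only [mul_apply, sum_mul, transpose_apply, map_apply, lastMatrix, of_apply,
          kroneckerPower_snoc_snoc, Algebra.smul_def, mul_assoc, Algebra.left_comm]
    _ = f (Fin.snoc a i) • d' := by rw [← hf (Fin.snoc a i), sum_pi_fin_succ_snoc]
    _ = _ := by simp [lastMatrix, Algebra.smul_def]

variable {lam : k}

theorem mul_eq_mul_of_headMatrix_mul_lastMatrix_eq (he : IsLeftEigentensor X e d)
    (hf : IsRightEigentensor X f d') (hlam : lam ≠ 0) (hfe : headMatrix f * lastMatrix e = lam • 1)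
    (i j : Fin n) :
    X i j * d = d' * X i j := by
  suffices X * scalar (Fin n) d = scalar (Fin n) d' * X by simpa using congrFun₂ this i j
  have key := mul_mul_mul_eq_of_mul_mul_eq hf.mul_headMatrix_mul_transpose
    he.transpose_mul_lastMatrix_mul
  rw [map_algebraMap_mul_scalar, Matrix.mul_assoc (scalar _ d'),
    map_algebraMap_mul_map_algebraMap hfe] at key
  exact eq_of_mul_algebraMap_mul_eq hlam key

theorem mul_eq_mul_of_headMatrix_mul_lastMatrix_eq' (he : IsLeftEigentensor X e d)
    (hf : IsRightEigentensor X f d') (hlam : lam ≠ 0) (hef : headMatrix e * lastMatrix f = lam • 1)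
    (i j : Fin n) :
    d * X i j = X i j * d' := by
  suffices scalar (Fin n) d * Xᵀ = Xᵀ * scalar (Fin n) d' by simpa using congrFun₂ this j i
  have key := mul_mul_mul_eq_of_mul_mul_eq he.transpose_mul_headMatrix_mul
    hf.mul_lastMatrix_mul_transpose
  rw [map_algebraMap_mul_scalar, Matrix.mul_assoc (scalar _ d),
    map_algebraMap_mul_map_algebraMap hef] at key
  exact (eq_of_mul_algebraMap_mul_eq hlam key).symm

end Eigentensors

lemma mem_center_of_commute_of_adjoin_eq_top {k K : Type*} [CommSemiring k] [Semiring K]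
    [Algebra k K] {s : Set K} (hs : Algebra.adjoin k s = ⊤) {z : K}
    (hz : ∀ x ∈ s, Commute x z) : z ∈ Set.center K := by
  have : Subalgebra.centralizer k {z} = ⊤ := top_le_iff.mp <| hs ▸ Algebra.adjoin_le
    fun x hx => (Subalgebra.mem_centralizer_iff k).mpr fun _ hy => hy ▸ (hz x hx).symm
  exact (Subalgebra.centralizer_eq_top_iff_subset k).mp this rfl

theorem det_central_general {k K : Type*} [Field k] [Ring K] [Algebra k K]
    (m n : ℕ)
    (e f : (Fin (m + 1) → Fin n) → k)
    (X : Matrix (Fin n) (Fin n) K) (d d' : Kˣ)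
    (h1 : ∀ jv : Fin (m + 1) → Fin n,
      (∑ iv : Fin (m + 1) → Fin n,
        e iv • (List.ofFn fun t : Fin (m + 1) => X (iv t) (jv t)).prod) =
        e jv • (d : K))
    (h2 : ∀ jv : Fin (m + 1) → Fin n,
      (∑ iv : Fin (m + 1) → Fin n,
        f iv • (List.ofFn fun t : Fin (m + 1) => X (jv t) (iv t)).prod) =
        f jv • (d' : K))
    (hgen : Algebra.adjoin k {x : K | ∃ i j : Fin n, x = X i j} = ⊤)
    (hodot : (∑ iv : Fin (m + 1) → Fin n, e iv * f iv) ≠ 0)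
    (hstar : ∃ lam : k, lam ≠ 0 ∧
      ((Matrix.of fun i j : Fin n =>
          ∑ kv : Fin m → Fin n, f (Fin.cons i kv) * e (Fin.snoc kv j)) =
            lam • (1 : Matrix (Fin n) (Fin n) k) ∨
        (Matrix.of fun i j : Fin n =>
          ∑ kv : Fin m → Fin n, e (Fin.cons i kv) * f (Fin.snoc kv j)) =
            lam • (1 : Matrix (Fin n) (Fin n) k))) :
    (d : K) = (d' : K) ∧ (d : K) ∈ Set.center K := by
  have he : IsLeftEigentensor X e (d : K) := h1
  have hf : IsRightEigentensor X f (d' : K) := h2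
  obtain rfl : d = d' := Units.ext (eq_of_eigentensors he hf hodot)
  refine ⟨rfl, mem_center_of_commute_of_adjoin_eq_top hgen ?_⟩
  rintro _ ⟨i, j, rfl⟩
  obtain ⟨lam, hlam, hfe | hef⟩ := hstar
  · exact mul_eq_mul_of_headMatrix_mul_lastMatrix_eq he hf hlam hfe i j
  · exact (mul_eq_mul_of_headMatrix_mul_lastMatrix_eq' he hf hlam hef i j).symm

/-- Under the `H(e,f)`-type relations with units `d, d'`, if the
entries of `X` generate `K` as a `k`-algebra, `e⊙f ≠ 0`, and either `f⋆e` or `e⋆f`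
is a nonzero scalar multiple of the identity matrix, then `d = d'` is central in `K`. -/
theorem det_central {k K : Type*} [Field k] [Ring K] [Algebra k K]
    (m n : ℕ) (hm : 1 ≤ m) (hn : 1 ≤ n)
    (e f : (Fin (m + 1) → Fin n) → k)
    (X : Matrix (Fin n) (Fin n) K) (d d' : Kˣ)
    (h1 : ∀ jv : Fin (m + 1) → Fin n,
      (∑ iv : Fin (m + 1) → Fin n,
        e iv • (List.ofFn fun t : Fin (m + 1) => X (iv t) (jv t)).prod) =
        e jv • (d : K))
    (h2 : ∀ jv : Fin (m + 1) → Fin n,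
      (∑ iv : Fin (m + 1) → Fin n,
        f iv • (List.ofFn fun t : Fin (m + 1) => X (jv t) (iv t)).prod) =
        f jv • (d' : K))
    (hgen : Algebra.adjoin k {x : K | ∃ i j : Fin n, x = X i j} = ⊤)
    (hodot : (∑ iv : Fin (m + 1) → Fin n, e iv * f iv) ≠ 0)
    (hstar : ∃ lam : k, lam ≠ 0 ∧
      ((Matrix.of fun i j : Fin n =>
          ∑ kv : Fin m → Fin n, f (Fin.cons i kv) * e (Fin.snoc kv j)) =
            lam • (1 : Matrix (Fin n) (Fin n) k) ∨
        (Matrix.of fun i j : Fin n =>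
          ∑ kv : Fin m → Fin n, e (Fin.cons i kv) * f (Fin.snoc kv j)) =
            lam • (1 : Matrix (Fin n) (Fin n) k))) :
    (d : K) = (d' : K) ∧ (d : K) ∈ Set.center K :=
  det_central_general m n e f X d d' h1 h2 hgen hodot hstar
end

section
/- Let e : (Fin m → Fin n) → k be P-cyclic for an invertible P ∈ GL_n(k) and let f : (Fin m → Fin n) → k be Q-cyclic for an invertible Q ∈ GL_n(k). Then, as n×n matrices over k, f⋆e = Q^{-T}·(e⋆f)ᵀ·P, i.e. for all i,j: (f⋆e)_{ij} = Σ_{a,ℓ} (Q^{-1})_{ℓi}·(e⋆f)_{aℓ}·P_{aj}. -/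
/-- If `e` is `P`-cyclic and `f` is `Q`-cyclic, then
`f⋆e = Q^{-T}·(e⋆f)ᵀ·P`, i.e. for all `i, j`:
`(f⋆e)_{ij} = Σ_{a,ℓ} (Q⁻¹)_{ℓi}·(e⋆f)_{aℓ}·P_{aj}`. -/
theorem fstar_e_eq {k : Type*} [Field k] (m n : ℕ) (hm : 1 ≤ m) (hn : 1 ≤ n)
    (e f : (Fin (m + 1) → Fin n) → k)
    (P : Matrix (Fin n) (Fin n) k) (hP : IsUnit P)
    (hecyc : ∀ (iv : Fin m → Fin n) (ℓ : Fin n),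
      e (Fin.snoc iv ℓ) = ∑ k' : Fin n, P k' ℓ * e (Fin.cons k' iv))
    (Q : Matrix (Fin n) (Fin n) k) (hQ : IsUnit Q)
    (hfcyc : ∀ (iv : Fin m → Fin n) (ℓ : Fin n),
      f (Fin.snoc iv ℓ) = ∑ k' : Fin n, Q k' ℓ * f (Fin.cons k' iv)) :
    ∀ i j : Fin n,
      (∑ kv : Fin m → Fin n, f (Fin.cons i kv) * e (Fin.snoc kv j)) =
      ∑ a : Fin n, ∑ ℓ : Fin n,
        Q⁻¹ ℓ i * (∑ kv : Fin m → Fin n, e (Fin.cons a kv) * f (Fin.snoc kv ℓ)) * P a j := by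
  intro i j
  have hQ1 : Q * Q⁻¹ = 1 :=
    Matrix.mul_nonsing_inv Q ((Matrix.isUnit_iff_isUnit_det Q).mp hQ)
  have key : ∀ k' : Fin n, (∑ ℓ : Fin n, Q k' ℓ * Q⁻¹ ℓ i) = if k' = i then 1 else 0 := by
    intro k'
    have h := congrFun (congrFun hQ1 k') i
    simpa [Matrix.mul_apply, Matrix.one_apply] using h
  have hrhs : ∀ a : Fin n,
      (∑ ℓ : Fin n, Q⁻¹ ℓ i * (∑ kv : Fin m → Fin n, e (Fin.cons a kv) * f (Fin.snoc kv ℓ)) * P a j)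
      = ∑ kv : Fin m → Fin n, e (Fin.cons a kv) * f (Fin.cons i kv) * P a j := by
    intro a
    calc (∑ ℓ : Fin n, Q⁻¹ ℓ i * (∑ kv : Fin m → Fin n, e (Fin.cons a kv) * f (Fin.snoc kv ℓ)) * P a j)
        = ∑ ℓ : Fin n, ∑ kv : Fin m → Fin n, ∑ k' : Fin n,
            Q k' ℓ * Q⁻¹ ℓ i * (e (Fin.cons a kv) * f (Fin.cons k' kv) * P a j) := by
          refine Finset.sum_congr rfl fun ℓ _ => ?_
          simp only [hfcyc, Finset.mul_sum, Finset.sum_mul]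
          refine Finset.sum_congr rfl fun kv _ => Finset.sum_congr rfl fun k' _ => ?_
          ring
      _ = ∑ kv : Fin m → Fin n, ∑ k' : Fin n, (∑ ℓ : Fin n, Q k' ℓ * Q⁻¹ ℓ i) *
            (e (Fin.cons a kv) * f (Fin.cons k' kv) * P a j) := by
          rw [Finset.sum_comm]
          refine Finset.sum_congr rfl fun kv _ => ?_
          rw [Finset.sum_comm]
          refine Finset.sum_congr rfl fun k' _ => ?_
          rw [Finset.sum_mul]
      _ = ∑ kv : Fin m → Fin n, e (Fin.cons a kv) * f (Fin.cons i kv) * P a j := by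
          refine Finset.sum_congr rfl fun kv _ => ?_
          simp only [key, ite_mul, one_mul, zero_mul, Finset.mem_univ,
            if_true]
          rw [Finset.sum_ite_eq' Finset.univ i fun x => e (Fin.cons a kv) * f (Fin.cons x kv) * P a j]
          simp
  rw [Finset.sum_congr rfl fun a _ => hrhs a]
  rw [Finset.sum_comm]
  refine Finset.sum_congr rfl fun kv _ => ?_
  rw [hecyc, Finset.mul_sum]
  refine Finset.sum_congr rfl fun a _ => ?_
  ring
end

section
/- Let k be a field, n ≥ 2, and q = (q_{ij}) an n×n matrix of nonzero scalars with q_{ij}·q_{ji} = 1 and q_{ii} = 1. Define e_q : (Fin n → Fin n) → k by e_q(i_1,…,i_n) = 0 if (i_1,…,i_n) is not a permutation of (1,…,n), and e_q(σ(1),…,σ(n)) = ∏_{j<j', σ(j)>σ(j')} (−q_{σ(j') σ(j)}) for a permutation σ. Then, in the free k-algebra on generators x_1,…,x_n, the two-sided ideal generated by the elements x_j x_i − q_{ji} x_i x_j for all i < j equals the two-sided ideal generated by the elements Σ_{a,b ∈ Fin n} e_q(λ_1,…,λ_{n−2},a,b)·x_a x_b for all tuples (λ_1,…,λ_{n−2})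 ∈ (Fin n)^{n−2}. -/
/-- The coefficient tensor `e_q` of the skew polynomial ring `k_q[x_1,…,x_n]`:
it vanishes off permutation tuples, and on the tuple `(σ(1),…,σ(n))` it equals
`∏_{j<j', σ(j)>σ(j')} (−q_{σ(j') σ(j)})`. -/
def skewForm {k : Type*} [Field k] {n : ℕ} (q : Matrix (Fin n) (Fin n) k)
    (iv : Fin n → Fin n) : k :=
  if Function.Bijective iv then
    ∏ p ∈ Finset.univ.filter (fun p : Fin n × Fin n => p.1 < p.2 ∧ iv p.2 < iv p.1),
      (-q (iv p.2) (iv p.1))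
  else 0

namespace SkewAux

variable {k : Type*} [Field k] {r : ℕ}

/-- position `n-2` -/
def U (r : ℕ) : Fin (r + 2) := Fin.natAdd r 0
/-- position `n-1` -/
def V (r : ℕ) : Fin (r + 2) := Fin.natAdd r 1

@[simp] lemma U_val : (U r).val = r := by simp [U]
@[simp] lemma V_val : (V r).val = r + 1 := by simp [V]

lemma U_lt_V : U r < V r := by simp [Fin.lt_def]

lemma U_ne_V : U r ≠ V r := ne_of_lt U_lt_V

@[simp] lemma append_U (lam : Fin r → Fin (r + 2)) (w : Fin 2 → Fin (r + 2)) :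
    Fin.append lam w (U r) = w 0 := Fin.append_right _ _ _

@[simp] lemma append_V (lam : Fin r → Fin (r + 2)) (w : Fin 2 → Fin (r + 2)) :
    Fin.append lam w (V r) = w 1 := Fin.append_right _ _ _

lemma castAdd_ne_U (t : Fin r) : Fin.castAdd 2 t ≠ U r := by
  simp only [ne_eq, Fin.ext_iff, Fin.coe_castAdd, U_val]
  omega

lemma castAdd_ne_V (t : Fin r) : Fin.castAdd 2 t ≠ V r := by
  simp only [ne_eq, Fin.ext_iff, Fin.coe_castAdd, V_val]
  omega

lemma lt_U_of_ne {x : Fin (r + 2)} (h1 : x ≠ U r) (h2 : x ≠ V r) : x < U r := by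
  rw [ne_eq, Fin.ext_iff] at h1 h2
  simp only [U_val, V_val] at h1 h2
  have := x.isLt
  rw [Fin.lt_def, U_val]
  omega

lemma swap_comp (lam : Fin r → Fin (r + 2)) (a b : Fin (r + 2)) :
    Fin.append lam ![b, a] = Fin.append lam ![a, b] ∘ (Equiv.swap (U r) (V r)) := by
  funext x
  refine Fin.addCases (fun t => ?_) (fun t => ?_) x
  · rw [Function.comp_apply,
      Equiv.swap_apply_of_ne_of_ne (castAdd_ne_U t) (castAdd_ne_V t),
      Fin.append_left, Fin.append_left]
  · fin_cases t
    · show Fin.append lam ![b, a] (U r) = _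
      rw [Function.comp_apply]
      show _ = Fin.append lam ![a, b] (Equiv.swap (U r) (V r) (U r))
      rw [Equiv.swap_apply_left, append_U, append_V]
      rfl
    · show Fin.append lam ![b, a] (V r) = _
      rw [Function.comp_apply]
      show _ = Fin.append lam ![a, b] (Equiv.swap (U r) (V r) (V r))
      rw [Equiv.swap_apply_right, append_V, append_U]
      rfl

lemma swap_lt {p1 p2 : Fin (r + 2)} (h : p1 < p2) (hne : (p1, p2) ≠ (U r, V r)) :
    Equiv.swap (U r) (V r) p1 < Equiv.swap (U r) (V r) p2 := by
  by_cases h2v : p2 = V r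
  · subst h2v
    have h1u : p1 ≠ U r := fun h1 => hne (by rw [h1])
    have h1v : p1 ≠ V r := ne_of_lt h
    rw [Equiv.swap_apply_right, Equiv.swap_apply_of_ne_of_ne h1u h1v]
    exact lt_U_of_ne h1u h1v
  · by_cases h2u : p2 = U r
    · subst h2u
      have h1u : p1 ≠ U r := ne_of_lt h
      have h1v : p1 ≠ V r := ne_of_lt (h.trans U_lt_V)
      rw [Equiv.swap_apply_left, Equiv.swap_apply_of_ne_of_ne h1u h1v]
      exact h.trans U_lt_V
    · have h2 : p2 < U r := lt_U_of_ne h2u h2v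
      have h1u : p1 ≠ U r := ne_of_lt (h.trans h2)
      have h1v : p1 ≠ V r := ne_of_lt ((h.trans h2).trans U_lt_V)
      rw [Equiv.swap_apply_of_ne_of_ne h1u h1v, Equiv.swap_apply_of_ne_of_ne h2u h2v]
      exact h

end SkewAux

namespace SkewAux
variable {k : Type*} [Field k] {r : ℕ}

lemma skewForm_diag (q : Matrix (Fin (r + 2)) (Fin (r + 2)) k)
    (lam : Fin r → Fin (r + 2)) (a : Fin (r + 2)) :
    skewForm q (Fin.append lam ![a, a]) = 0 := by
  rw [skewForm, if_neg]
  intro hbij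
  have : Fin.append lam ![a, a] (U r) = Fin.append lam ![a, a] (V r) := by
    rw [append_U, append_V]
    rfl
  exact U_ne_V (hbij.injective this)

lemma skewForm_ne_zero (q : Matrix (Fin (r + 2)) (Fin (r + 2)) k)
    (hq0 : ∀ i j, q i j ≠ 0)
    (iv : Fin (r + 2) → Fin (r + 2)) (hbij : Function.Bijective iv) :
    skewForm q iv ≠ 0 := by
  rw [skewForm, if_pos hbij]
  rw [Finset.prod_ne_zero_iff]
  intro p _
  simpa using hq0 (iv p.2) (iv p.1)

lemma skewForm_swap (q : Matrix (Fin (r + 2)) (Fin (r + 2)) k)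
    (lam : Fin r → Fin (r + 2)) {a b : Fin (r + 2)} (hab : a < b) :
    skewForm q (Fin.append lam ![b, a]) = -q a b * skewForm q (Fin.append lam ![a, b]) := by
  set s : Equiv.Perm (Fin (r + 2)) := Equiv.swap (U r) (V r) with hs
  set iv := Fin.append lam ![a, b] with hiv
  set iw := Fin.append lam ![b, a] with hiw
  have hcomp : iw = iv ∘ s := swap_comp lam a b
  have hws : ∀ x, iw (s x) = iv x := by
    intro x
    rw [hcomp, Function.comp_apply, Equiv.swap_apply_self]
  have hvs : ∀ x, iv (s x) = iw x := by
    intro x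
    rw [hcomp, Function.comp_apply]
  have hivu : iv (U r) = a := by rw [hiv, append_U]; rfl
  have hivv : iv (V r) = b := by rw [hiv, append_V]; rfl
  have hiwu : iw (U r) = b := by rw [hiw, append_U]; rfl
  have hiwv : iw (V r) = a := by rw [hiw, append_V]; rfl
  have hbijiff : Function.Bijective iw ↔ Function.Bijective iv := by
    rw [hcomp]
    exact Function.Bijective.of_comp_iff iv s.bijective
  by_cases hbij : Function.Bijective iv
  · rw [skewForm, skewForm, if_pos hbij, if_pos (hbijiff.mpr hbij)]
    set Sv := Finset.univ.filter
      (fun p : Fin (r + 2) × Fin (r + 2) => p.1 < p.2 ∧ iv p.2 < iv p.1) with hSv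
    set Sw := Finset.univ.filter
      (fun p : Fin (r + 2) × Fin (r + 2) => p.1 < p.2 ∧ iw p.2 < iw p.1) with hSw
    have huvSw : (U r, V r) ∈ Sw := by
      rw [hSw, Finset.mem_filter]
      refine ⟨Finset.mem_univ _, U_lt_V, ?_⟩
      rw [hiwu, hiwv]
      exact hab
    rw [← Finset.mul_prod_erase Sw _ huvSw]
    have hfac : -q (iw (U r, V r).2) (iw (U r, V r).1) = -q a b := by
      rw [hiwu, hiwv]
    rw [hfac]
    congr 1
    refine (Finset.prod_nbij' (fun p => (s p.1, s p.2)) (fun p => (s p.1, s p.2))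
      ?_ ?_ ?_ ?_ ?_).symm
    · -- Sv → Sw.erase
      intro p hp
      rw [hSv, Finset.mem_filter] at hp
      obtain ⟨-, hlt, hinv⟩ := hp
      have hpne : (p.1, p.2) ≠ (U r, V r) := by
        intro hcon
        rw [Prod.mk.injEq] at hcon
        rw [hcon.1, hcon.2, hivu, hivv] at hinv
        exact absurd hinv (not_lt_of_gt hab)
      rw [Finset.mem_erase, hSw, Finset.mem_filter]
      refine ⟨?_, Finset.mem_univ _, swap_lt hlt hpne, ?_⟩
      · intro hcon
        rw [Prod.mk.injEq] at hcon
        have h1 : p.1 = V r := by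
          have := congrArg s hcon.1
          simpa [hs, Equiv.swap_apply_self, Equiv.swap_apply_left] using this
        have h2 : p.2 = U r := by
          have := congrArg s hcon.2
          simpa [hs, Equiv.swap_apply_self, Equiv.swap_apply_right] using this
        rw [h1, h2] at hlt
        exact absurd (hlt.trans U_lt_V) (lt_irrefl _)
      · rw [hws, hws]
        exact hinv
    · -- Sw.erase → Sv
      intro p hp
      rw [Finset.mem_erase, hSw, Finset.mem_filter] at hp
      obtain ⟨hne, -, hlt, hinv⟩ := hp
      have hpne : (p.1, p.2) ≠ (U r, V r) := by
        intro hcon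
        exact hne (Prod.ext (congrArg Prod.fst hcon) (congrArg Prod.snd hcon))
      rw [hSv, Finset.mem_filter]
      refine ⟨Finset.mem_univ _, swap_lt hlt hpne, ?_⟩
      rw [hvs, hvs]
      exact hinv
    · intro p _
      simp [hs, Equiv.swap_apply_self]
    · intro p _
      simp [hs, Equiv.swap_apply_self]
    · intro p _
      rw [hws, hws]
  · rw [skewForm, skewForm, if_neg hbij, if_neg (fun h => hbij (hbijiff.mp h)), mul_zero]

end SkewAux

namespace SkewAux
open FreeAlgebra
variable {k : Type*} [Field k] {r : ℕ}

lemma decomp (q : Matrix (Fin (r + 2)) (Fin (r + 2)) k) (lam : Fin r → Fin (r + 2)) :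
    (∑ a : Fin (r + 2), ∑ b : Fin (r + 2),
        skewForm q (Fin.append lam ![a, b]) • (ι k a * ι k b)) =
      ∑ p ∈ Finset.univ.filter (fun p : Fin (r + 2) × Fin (r + 2) => p.1 < p.2),
        skewForm q (Fin.append lam ![p.1, p.2]) •
          (ι k p.1 * ι k p.2 - q p.1 p.2 • (ι k p.2 * ι k p.1)) := by
  calc (∑ a : Fin (r + 2), ∑ b : Fin (r + 2),
        skewForm q (Fin.append lam ![a, b]) • (ι k a * ι k b))
      = ∑ p : Fin (r + 2) × Fin (r + 2),
          skewForm q (Fin.append lam ![p.1, p.2]) • (ι k p.1 * ι k p.2) :=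
        (Fintype.sum_prod_type (fun p : Fin (r + 2) × Fin (r + 2) =>
          skewForm q (Fin.append lam ![p.1, p.2]) • (ι k p.1 * ι k p.2))).symm
    _ = (∑ p ∈ Finset.univ.filter (fun p : Fin (r + 2) × Fin (r + 2) => p.1 < p.2),
          skewForm q (Fin.append lam ![p.1, p.2]) • (ι k p.1 * ι k p.2)) +
        ∑ p ∈ Finset.univ.filter (fun p : Fin (r + 2) × Fin (r + 2) => ¬ p.1 < p.2),
          skewForm q (Fin.append lam ![p.1, p.2]) • (ι k p.1 * ι k p.2) :=
        (Finset.sum_filter_add_sum_filter_not _ _ _).symm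
    _ = (∑ p ∈ Finset.univ.filter (fun p : Fin (r + 2) × Fin (r + 2) => p.1 < p.2),
          skewForm q (Fin.append lam ![p.1, p.2]) • (ι k p.1 * ι k p.2)) +
        ∑ p ∈ Finset.univ.filter (fun p : Fin (r + 2) × Fin (r + 2) => p.1 < p.2),
          skewForm q (Fin.append lam ![p.2, p.1]) • (ι k p.2 * ι k p.1) := by
        congr 1
        rw [← Finset.sum_subset (s₁ := Finset.univ.filter
            (fun p : Fin (r + 2) × Fin (r + 2) => p.2 < p.1))
          (fun p hp => by
            rw [Finset.mem_filter] at hp ⊢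
            exact ⟨Finset.mem_univ _, not_lt_of_gt hp.2⟩)
          (fun p hp hnp => by
            rw [Finset.mem_filter] at hp hnp
            push_neg at hnp
            have heq : p.2 = p.1 := le_antisymm (not_lt.mp hp.2) (hnp (Finset.mem_univ _))
            rw [heq, skewForm_diag, zero_smul])]
        refine Finset.sum_nbij' Prod.swap Prod.swap ?_ ?_ ?_ ?_ ?_
        · intro p hp
          rw [Finset.mem_filter] at hp ⊢
          exact ⟨Finset.mem_univ _, hp.2⟩
        · intro p hp
          rw [Finset.mem_filter] at hp ⊢
          exact ⟨Finset.mem_univ _, hp.2⟩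
        · intro p _; simp
        · intro p _; simp
        · intro p _; rfl
    _ = ∑ p ∈ Finset.univ.filter (fun p : Fin (r + 2) × Fin (r + 2) => p.1 < p.2),
          skewForm q (Fin.append lam ![p.1, p.2]) •
            (ι k p.1 * ι k p.2 - q p.1 p.2 • (ι k p.2 * ι k p.1)) := by
        rw [← Finset.sum_add_distrib]
        refine Finset.sum_congr rfl fun p hp => ?_
        rw [Finset.mem_filter] at hp
        rw [skewForm_swap q lam hp.2]
        module

end SkewAux

namespace SkewAux

lemma span_le' {R : Type*} [NonUnitalNonAssocRing R] {s : Set R} {I : TwoSidedIdeal R}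
    (h : ∀ z ∈ s, z ∈ I) : TwoSidedIdeal.span s ≤ I :=
  fun x hx => TwoSidedIdeal.mem_span_iff.mp hx I h

lemma smul_mem' {k : Type*} [Field k] {X : Type*} (I : TwoSidedIdeal (FreeAlgebra k X))
    (c : k) {x : FreeAlgebra k X} (h : x ∈ I) : c • x ∈ I := by
  rw [Algebra.smul_def]
  exact I.mul_mem_left _ _ h

end SkewAux

open SkewAux

open FreeAlgebra in
/-- (Here `n = r + 2 ≥ 2`.) For a multiplicatively antisymmetric
matrix `q` of nonzero scalars, the relation ideal of the skew polynomial ring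
`k_q[x_1,…,x_n]` coincides with the ideal of `(n−2)`-fold partial derivatives of the
superpotential with coefficient tensor `e_q`: in the free algebra, the two-sided ideal
generated by `{x_j x_i − q_{ji} x_i x_j : i < j}` equals the two-sided ideal generated
by `{Σ_{a,b} e_q(λ ⧺ (a,b))·x_a x_b : λ ∈ (Fin n)^{n−2}}`. -/
theorem skew_polynomial_relations_eq_superpotential_relations
    {k : Type*} [Field k] (r : ℕ) (q : Matrix (Fin (r + 2)) (Fin (r + 2)) k)
    (hq0 : ∀ i j, q i j ≠ 0)
    (hq1 : ∀ i j, q i j * q j i = 1)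
    (hq2 : ∀ i, q i i = 1) :
    TwoSidedIdeal.span
      {z : FreeAlgebra k (Fin (r + 2)) | ∃ i j : Fin (r + 2), i < j ∧
        z = ι k j * ι k i - q j i • (ι k i * ι k j)} =
    TwoSidedIdeal.span
      {z : FreeAlgebra k (Fin (r + 2)) | ∃ lam : Fin r → Fin (r + 2),
        z = ∑ a : Fin (r + 2), ∑ b : Fin (r + 2),
          skewForm q (Fin.append lam ![a, b]) • (ι k a * ι k b)} := by
  apply le_antisymm
  · -- skew relations ⊆ superpotential ideal
    apply span_le'
    rintro z ⟨i, j, hij, rfl⟩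
    have hijne : i ≠ j := ne_of_lt hij
    -- construct lam enumerating the complement of {i, j}
    have hpair : ({i, j} : Finset (Fin (r + 2))).card = 2 := Finset.card_pair hijne
    have hcard : Fintype.card (({i, j}ᶜ : Finset (Fin (r + 2))) : Finset (Fin (r + 2))) = r := by
      rw [Fintype.card_coe, Finset.card_compl, hpair, Fintype.card_fin]
      omega
    let e := Fintype.equivFinOfCardEq hcard
    set lam : Fin r → Fin (r + 2) := fun t => ((e.symm t : ({i, j}ᶜ : Finset (Fin (r + 2)))) :
      Fin (r + 2)) with hlam
    have hlam_surj : ∀ z ∈ ({i, j}ᶜ : Finset (Fin (r + 2))), ∃ t, lam t = z := by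
      intro z hz
      exact ⟨e ⟨z, hz⟩, by simp [hlam]⟩
    have hbij : Function.Bijective (Fin.append lam ![i, j]) := by
      rw [← Finite.surjective_iff_bijective]
      intro z
      by_cases hzi : z = i
      · exact ⟨U r, by rw [append_U, hzi]; rfl⟩
      by_cases hzj : z = j
      · exact ⟨V r, by rw [append_V, hzj]; rfl⟩
      · have hz : z ∈ ({i, j}ᶜ : Finset (Fin (r + 2))) := by
          simp [Finset.mem_compl, hzi, hzj]
        obtain ⟨t, ht⟩ := hlam_surj z hz
        exact ⟨Fin.castAdd 2 t, by rw [Fin.append_left]; exact ht⟩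
    set c := skewForm q (Fin.append lam ![i, j]) with hc
    have hcne : c ≠ 0 := skewForm_ne_zero q hq0 _ hbij
    have hSmem : (∑ a : Fin (r + 2), ∑ b : Fin (r + 2),
        skewForm q (Fin.append lam ![a, b]) • (ι k a * ι k b)) ∈
        TwoSidedIdeal.span
          {z : FreeAlgebra k (Fin (r + 2)) | ∃ lam : Fin r → Fin (r + 2),
            z = ∑ a : Fin (r + 2), ∑ b : Fin (r + 2),
              skewForm q (Fin.append lam ![a, b]) • (ι k a * ι k b)} :=
      TwoSidedIdeal.subset_span ⟨lam, rfl⟩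
    have hSeq : (∑ a : Fin (r + 2), ∑ b : Fin (r + 2),
        skewForm q (Fin.append lam ![a, b]) • (ι k a * ι k b)) =
        c • (ι k i * ι k j - q i j • (ι k j * ι k i)) := by
      rw [decomp]
      refine Finset.sum_eq_single_of_mem (i, j)
        (Finset.mem_filter.mpr ⟨Finset.mem_univ _, hij⟩) ?_
      intro p hp hne
      suffices h : skewForm q (Fin.append lam ![p.1, p.2]) = 0 by rw [h, zero_smul]
      rw [skewForm, if_neg]
      intro hb
      rw [Finset.mem_filter] at hp
      have hlt := hp.2
      have h1 : p.1 = i ∨ p.1 = j := by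
        by_contra hcon
        push_neg at hcon
        have hm : p.1 ∈ ({i, j}ᶜ : Finset (Fin (r + 2))) := by
          simp [Finset.mem_compl, hcon.1, hcon.2]
        obtain ⟨t, ht⟩ := hlam_surj _ hm
        have heq : Fin.append lam ![p.1, p.2] (Fin.castAdd 2 t) =
            Fin.append lam ![p.1, p.2] (U r) := by
          rw [Fin.append_left, append_U, ht]; rfl
        exact castAdd_ne_U t (hb.injective heq)
      have h2 : p.2 = i ∨ p.2 = j := by
        by_contra hcon
        push_neg at hcon
        have hm : p.2 ∈ ({i, j}ᶜ : Finset (Fin (r + 2))) := by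
          simp [Finset.mem_compl, hcon.1, hcon.2]
        obtain ⟨t, ht⟩ := hlam_surj _ hm
        have heq : Fin.append lam ![p.1, p.2] (Fin.castAdd 2 t) =
            Fin.append lam ![p.1, p.2] (V r) := by
          rw [Fin.append_left, append_V, ht]; rfl
        exact castAdd_ne_V t (hb.injective heq)
      rcases h1 with h1 | h1 <;> rcases h2 with h2 | h2
      · rw [h1, h2] at hlt; exact lt_irrefl _ hlt
      · exact hne (Prod.ext h1 h2)
      · rw [h1, h2] at hlt; exact absurd (hlt.trans hij) (lt_irrefl _)
      · rw [h1, h2] at hlt; exact lt_irrefl _ hlt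
    have hSz : c • (ι k i * ι k j - q i j • (ι k j * ι k i)) =
        (-(c * q i j)) • (ι k j * ι k i - q j i • (ι k i * ι k j)) := by
      rw [smul_sub, smul_sub, smul_smul, smul_smul]
      have e1 : -(c * q i j) * q j i = -c := by linear_combination (-c) * hq1 i j
      rw [e1, neg_smul, neg_smul, sub_neg_eq_add]
      abel
    have hd : (-(c * q i j)) ≠ 0 := by
      simp only [ne_eq, neg_eq_zero, mul_eq_zero, not_or]
      exact ⟨hcne, hq0 i j⟩
    have hzz : ι k j * ι k i - q j i • (ι k i * ι k j) =
        (-(c * q i j))⁻¹ • (∑ a : Fin (r + 2), ∑ b : Fin (r + 2),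
          skewForm q (Fin.append lam ![a, b]) • (ι k a * ι k b)) := by
      rw [hSeq, hSz, inv_smul_smul₀ hd]
    rw [hzz]
    exact smul_mem' _ _ hSmem
  · -- superpotential relations ⊆ skew ideal
    apply span_le'
    rintro z ⟨lam, rfl⟩
    rw [decomp]
    apply TwoSidedIdeal.finsetSum_mem
    intro p hp
    rw [Finset.mem_filter] at hp
    have hgen : (ι k p.2 * ι k p.1 - q p.2 p.1 • (ι k p.1 * ι k p.2)) ∈
        TwoSidedIdeal.span
          {z : FreeAlgebra k (Fin (r + 2)) | ∃ i j : Fin (r + 2), i < j ∧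
            z = ι k j * ι k i - q j i • (ι k i * ι k j)} :=
      TwoSidedIdeal.subset_span ⟨p.1, p.2, hp.2, rfl⟩
    have heq : skewForm q (Fin.append lam ![p.1, p.2]) •
        (ι k p.1 * ι k p.2 - q p.1 p.2 • (ι k p.2 * ι k p.1)) =
        (skewForm q (Fin.append lam ![p.1, p.2]) * (-q p.1 p.2)) •
          (ι k p.2 * ι k p.1 - q p.2 p.1 • (ι k p.1 * ι k p.2)) := by
      set e := skewForm q (Fin.append lam ![p.1, p.2])
      rw [smul_sub, smul_sub, smul_smul, smul_smul]
      have e1 : e * -q p.1 p.2 * q p.2 p.1 = -e := by linear_combination (-e) * hq1 p.1 p.2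
      rw [e1, neg_smul, sub_neg_eq_add, mul_neg, neg_smul, sub_eq_add_neg]
      abel
    rw [heq]
    exact smul_mem' _ _ hgen
end
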